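/- arXiv:1801.05195 — 7 statements merged into one kernel-verified Lean document; each statement's English description precedes it below -/
import Mathlib

section
/- Existence of the entropy density: If P is an order-hereditary property of k-colourings with P_n ≠ ∅ for every n ∈ ℕ, then the sequence (ex(n,P)/C(n,2))_{n≥2} is nonincreasing and tends to a limit π(P) ∈ [0,1] as n → ∞. -/
open Filter

abbrev Edge (n : ℕ) := {p : Fin n × Fin n // p.1 < p.2}

abbrev Colouring (k n : ℕ) := Edge n → Fin k

abbrev Template (k n : ℕ) := Edge n → Finset (Fin k)

def Proper {k n : ℕ} (t : Template k n) : Prop := ∀ e, (t e).Nonempty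

def Realises {k n : ℕ} (c : Colouring k n) (t : Template k n) : Prop := ∀ e, c e ∈ t e

noncomputable def Ent {k n : ℕ} (t : Template k n) : ℝ :=
  ∑ e : Edge n, Real.logb k ((t e).card)

def Edge.map {m n : ℕ} (φ : Fin m → Fin n) (h : StrictMono φ) (e : Edge m) : Edge n :=
  ⟨(φ e.1.1, φ e.1.2), h e.2⟩

def restrictC {k m n : ℕ} (c : Colouring k n) (φ : Fin m → Fin n) (h : StrictMono φ) :
    Colouring k m := fun e => c (Edge.map φ h e)

def restrictT {k m n : ℕ} (t : Template k n) (φ : Fin m → Fin n) (h : StrictMono φ) :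
    Template k m := fun e => t (Edge.map φ h e)

def Forb {k N : ℕ} (F : Set (Colouring k N)) (n : ℕ) : Set (Colouring k n) :=
  {c | ∀ (φ : Fin N → Fin n) (h : StrictMono φ), restrictC c φ h ∉ F}

def OrderHereditary {k : ℕ} (P : ∀ n, Set (Colouring k n)) : Prop :=
  ∀ (m n : ℕ) (φ : Fin m → Fin n) (h : StrictMono φ) (c : Colouring k n),
    c ∈ P n → restrictC c φ h ∈ P m

noncomputable def exEnt {k n : ℕ} (A : Set (Colouring k n)) : ℝ :=
  sSup {x | ∃ t : Template k n, Proper t ∧ (∀ c, Realises c t → c ∈ A) ∧ Ent t = x}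

noncomputable def badPairs {k N n : ℕ} (t : Template k n) (F : Set (Colouring k N)) : ℕ :=
  Set.ncard {p : (Fin N → Fin n) × Colouring k N |
    ∃ h : StrictMono p.1, p.2 ∈ F ∧ Realises p.2 (restrictT t p.1 h)}

def TemplateLE {k m n : ℕ} (t : Template k m) (t' : Template k n) : Prop :=
  ∃ (φ : Fin m → Fin n) (h : StrictMono φ), ∀ e, t e ⊆ restrictT t' φ h e

def IsContainerFamily {k n : ℕ} (T : Finset (Template k n)) (A : Set (Colouring k n)) : Prop :=
  ∀ t : Template k n, Proper t → (∀ c, Realises c t → c ∈ A) → ∃ t' ∈ T, TemplateLE t t'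

/-! Deleting a vertex from a template all of whose realisations lie in `P (n+1)` leaves a
template all of whose realisations lie in `P n`: a realisation of the smaller template extends
to one of the larger template by colouring the missing edges from their (nonempty) lists, and
heredity restricts it back. Each edge of `K_{n+1}` survives exactly `n - 1` of the `n + 1`
vertex deletions, so averaging gives `(n - 1) ex(n+1) ≤ (n + 1) ex(n)`, which is the
monotonicity of `ex(n) / C(n,2)`. Every edge contributes at most `log_k k = 1` to the entropy,
so these ratios lie in `[0, 1]`, and a bounded antitone sequence converges. -/

namespace Edge

def equivSigma (n : ℕ) : Edge n ≃ Σ j : Fin n, Fin j where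
  toFun e := ⟨e.1.2, ⟨e.1.1, e.2⟩⟩
  invFun x := ⟨(⟨x.2, x.2.2.trans x.1.2⟩, x.1), x.2.2⟩
  left_inv _ := rfl
  right_inv _ := rfl

theorem card (n : ℕ) : Fintype.card (Edge n) = n.choose 2 := by
  rw [Fintype.card_congr (equivSigma n), Fintype.card_sigma]
  simp only [Fintype.card_fin]
  rw [Fin.sum_univ_eq_sum_range (fun j => j) n, Finset.sum_range_id, Nat.choose_two_right]

theorem map_injective {m n : ℕ} (φ : Fin m → Fin n) (h : StrictMono φ) :
    Function.Injective (Edge.map φ h) := by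
  intro e f hef
  obtain ⟨h₁, h₂⟩ := Prod.mk.inj (congrArg Subtype.val hef)
  exact Subtype.ext (Prod.ext (h.injective h₁) (h.injective h₂))

theorem sum_map_succAbove {M : Type*} [AddCommMonoid M] {n : ℕ} (g : Edge (n + 1) → M)
    (i : Fin (n + 1)) :
    ∑ f : Edge n, g (Edge.map i.succAbove (Fin.strictMono_succAbove i) f) =
      ∑ e : Edge (n + 1) with e.1.1 ≠ i ∧ e.1.2 ≠ i, g e := by
  refine Finset.sum_bij (fun f _ => Edge.map i.succAbove (Fin.strictMono_succAbove i) f)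
    (fun f _ => ?_) (fun f _ f' _ => (map_injective _ _ ·)) (fun e he => ?_) (fun _ _ => rfl)
  · simpa using ⟨Fin.succAbove_ne i f.1.1, Fin.succAbove_ne i f.1.2⟩
  · simp only [Finset.mem_filter, Finset.mem_univ, true_and] at he
    obtain ⟨a, ha⟩ := Fin.exists_succAbove_eq he.1
    obtain ⟨b, hb⟩ := Fin.exists_succAbove_eq he.2
    have hab : a < b := by
      rw [← Fin.succAbove_lt_succAbove_iff (p := i), ha, hb]
      exact e.2
    exact ⟨⟨(a, b), hab⟩, Finset.mem_univ _, Subtype.ext (Prod.ext ha hb)⟩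

theorem card_filter_fst_ne_snd_ne {n : ℕ} (e : Edge (n + 1)) :
    Finset.card {i : Fin (n + 1) | e.1.1 ≠ i ∧ e.1.2 ≠ i} = n - 1 := by
  have : ({i | e.1.1 ≠ i ∧ e.1.2 ≠ i} : Finset (Fin (n + 1))) = {e.1.1, e.1.2}ᶜ := by
    ext i; simp [eq_comm]
  rw [this, Finset.card_compl, Finset.card_pair e.2.ne, Fintype.card_fin]
  omega

theorem sum_sum_map_succAbove {n : ℕ} (g : Edge (n + 1) → ℝ) :
    ∑ i : Fin (n + 1), ∑ f : Edge n, g (Edge.map i.succAbove (Fin.strictMono_succAbove i) f) =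
      ((n : ℝ) - 1) * ∑ e, g e := by
  simp_rw [sum_map_succAbove, Finset.sum_filter]
  rw [Finset.sum_comm, Finset.mul_sum]
  refine Finset.sum_congr rfl fun e _ => ?_
  have hn : 1 ≤ n := by have := e.2; omega
  rw [← Finset.sum_filter, Finset.sum_const, card_filter_fst_ne_snd_ne, nsmul_eq_mul, Nat.cast_sub hn,
    Nat.cast_one]

end Edge

section Templates

variable {k : ℕ}

theorem sum_Ent_restrictT_succAbove {n : ℕ} (t : Template k (n + 1)) :
    ∑ i : Fin (n + 1), Ent (restrictT t i.succAbove (Fin.strictMono_succAbove i)) =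
      ((n : ℝ) - 1) * Ent t :=
  Edge.sum_sum_map_succAbove fun e => Real.logb k (t e).card

theorem Ent_nonneg (hk : 2 ≤ k) {n : ℕ} {t : Template k n} (ht : Proper t) : 0 ≤ Ent t :=
  Finset.sum_nonneg fun e _ =>
    Real.logb_nonneg (by exact_mod_cast hk) (by exact_mod_cast (ht e).card_pos)

theorem Ent_le_choose (hk : 2 ≤ k) {n : ℕ} (t : Template k n) : Ent t ≤ n.choose 2 := by
  have hk' : (1 : ℝ) < k := by exact_mod_cast hk
  have hterm (e : Edge n) : Real.logb k (t e).card ≤ 1 := by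
    rcases (t e).eq_empty_or_nonempty with he | he
    · simp [he]
    calc Real.logb k (t e).card ≤ Real.logb k k :=
          Real.logb_le_logb_of_le hk' (by exact_mod_cast he.card_pos)
            (by exact_mod_cast (t e).card_le_univ.trans_eq (Fintype.card_fin k))
      _ = 1 := Real.logb_self_eq_one hk'
  calc Ent t ≤ ∑ _e : Edge n, (1 : ℝ) := Finset.sum_le_sum fun e _ => hterm e
    _ = n.choose 2 := by simp [Edge.card]

theorem Realises.exists_extension {m n : ℕ} {t : Template k n} (ht : Proper t)
    {φ : Fin m → Fin n} {hφ : StrictMono φ} {c : Colouring k m}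
    (hc : Realises c (restrictT t φ hφ)) :
    ∃ c' : Colouring k n, Realises c' t ∧ restrictC c' φ hφ = c := by
  classical
  have hinj := Edge.map_injective φ hφ
  refine ⟨Function.extend (Edge.map φ hφ) c fun e => (ht e).choose, fun e => ?_,
    funext (hinj.extend_apply _ _)⟩
  by_cases he : ∃ f, Edge.map φ hφ f = e
  · obtain ⟨f, rfl⟩ := he
    rw [hinj.extend_apply]
    exact hc f
  · rw [Function.extend_apply' _ _ _ he]
    exact (ht e).choose_spec

theorem OrderHereditary.realises_restrictT {P : ∀ n, Set (Colouring k n)}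
    (hP : OrderHereditary P) {m n : ℕ} {t : Template k n} (ht : Proper t)
    (htP : ∀ c, Realises c t → c ∈ P n) (φ : Fin m → Fin n) (hφ : StrictMono φ) :
    ∀ c, Realises c (restrictT t φ hφ) → c ∈ P m := by
  intro c hc
  obtain ⟨c', hc', rfl⟩ := hc.exists_extension ht
  exact hP m n φ hφ c' (htP c' hc')

end Templates

section ExtremalEntropy

variable {k n : ℕ}

theorem Ent_le_exEnt (hk : 2 ≤ k) {A : Set (Colouring k n)} {t : Template k n} (ht : Proper t)
    (htA : ∀ c, Realises c t → c ∈ A) : Ent t ≤ exEnt A :=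
  le_csSup ⟨n.choose 2, fun _ ⟨t', _, _, hx⟩ => hx ▸ Ent_le_choose hk t'⟩ ⟨t, ht, htA, rfl⟩

theorem exEnt_le {A : Set (Colouring k n)} {a : ℝ} (ha : 0 ≤ a)
    (h : ∀ t : Template k n, Proper t → (∀ c, Realises c t → c ∈ A) → Ent t ≤ a) :
    exEnt A ≤ a :=
  Real.sSup_le (fun _ ⟨t, ht, htA, hx⟩ => hx ▸ h t ht htA) ha

theorem exEnt_nonneg (hk : 2 ≤ k) (A : Set (Colouring k n)) : 0 ≤ exEnt A :=
  Real.sSup_nonneg fun _ ⟨_, ht, _, hx⟩ => hx ▸ Ent_nonneg hk ht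

theorem exEnt_le_choose (hk : 2 ≤ k) (A : Set (Colouring k n)) : exEnt A ≤ n.choose 2 :=
  exEnt_le (Nat.cast_nonneg _) fun t _ _ => Ent_le_choose hk t

theorem exEnt_div_choose_mem_Icc (hk : 2 ≤ k) (A : Set (Colouring k n)) :
    exEnt A / n.choose 2 ∈ Set.Icc (0 : ℝ) 1 :=
  ⟨div_nonneg (exEnt_nonneg hk A) (Nat.cast_nonneg _),
    div_le_one_of_le₀ (exEnt_le_choose hk A) (Nat.cast_nonneg _)⟩

end ExtremalEntropy

namespace OrderHereditary

variable {k : ℕ} {P : ∀ n, Set (Colouring k n)}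

theorem sub_one_mul_exEnt_succ_le (hk : 2 ≤ k) (hP : OrderHereditary P) (n : ℕ) :
    ((n : ℝ) - 1) * exEnt (P (n + 1)) ≤ ((n : ℝ) + 1) * exEnt (P n) := by
  rcases le_or_gt (n : ℝ) 1 with hn | hn
  · have := exEnt_nonneg hk (P (n + 1))
    have := exEnt_nonneg hk (P n)
    nlinarith
  have hn' : (0 : ℝ) < n - 1 := by linarith
  rw [mul_comm, ← le_div_iff₀ hn']
  refine exEnt_le (by have := exEnt_nonneg hk (P n); positivity) fun t ht htP => ?_
  rw [le_div_iff₀ hn', mul_comm, ← sum_Ent_restrictT_succAbove]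
  calc ∑ i : Fin (n + 1), Ent (restrictT t i.succAbove (Fin.strictMono_succAbove i))
      ≤ ∑ _i : Fin (n + 1), exEnt (P n) := Finset.sum_le_sum fun i _ =>
        Ent_le_exEnt hk (fun e => ht _) (hP.realises_restrictT ht htP _ _)
    _ = ((n : ℝ) + 1) * exEnt (P n) := by simp

theorem exEnt_div_choose_succ_le (hk : 2 ≤ k) (hP : OrderHereditary P) {n : ℕ} (hn : 2 ≤ n) :
    exEnt (P (n + 1)) / ((n + 1).choose 2 : ℕ) ≤ exEnt (P n) / (n.choose 2 : ℕ) := by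
  have hn' : (2 : ℝ) ≤ n := by exact_mod_cast hn
  rw [div_le_div_iff₀ (by exact_mod_cast Nat.choose_pos (by omega))
    (by exact_mod_cast Nat.choose_pos hn), Nat.cast_choose_two, Nat.cast_choose_two]
  push_cast
  nlinarith [sub_one_mul_exEnt_succ_le hk hP n]

theorem antitoneOn_exEnt_div_choose (hk : 2 ≤ k) (hP : OrderHereditary P) :
    AntitoneOn (fun n => exEnt (P n) / (n.choose 2 : ℝ)) {n | 2 ≤ n} :=
  antitoneOn_nat_Ici_of_succ_le fun _ hn => exEnt_div_choose_succ_le hk hP hn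

end OrderHereditary

theorem entropy_density_exists_general (k : ℕ) (hk : 2 ≤ k)
    (P : ∀ n, Set (Colouring k n)) (hP : OrderHereditary P) :
    ∃ π : ℝ, π ∈ Set.Icc (0 : ℝ) 1 ∧
      (∀ m n : ℕ, 2 ≤ m → m ≤ n →
        exEnt (P n) / (n.choose 2 : ℝ) ≤ exEnt (P m) / (m.choose 2 : ℝ)) ∧
      Tendsto (fun n => exEnt (P n) / (n.choose 2 : ℝ)) atTop (nhds π) := by
  set a : ℕ → ℝ := fun n => exEnt (P n) / (n.choose 2 : ℝ)
  have hmono := hP.antitoneOn_exEnt_div_choose hk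
  have hanti : Antitone fun j => a (j + 2) := fun i j hij =>
    hmono (Nat.le_add_left 2 i) (Nat.le_add_left 2 j) (by omega)
  have hbdd : BddBelow (Set.range fun j => a (j + 2)) :=
    ⟨0, Set.forall_mem_range.2 fun j => (exEnt_div_choose_mem_Icc hk (P (j + 2))).1⟩
  have hlim : Tendsto a atTop (nhds (⨅ j, a (j + 2))) :=
    (tendsto_add_atTop_iff_nat 2).1 (tendsto_atTop_ciInf hanti hbdd)
  refine ⟨_, isClosed_Icc.mem_of_tendsto hlim (Eventually.of_forall fun n =>
    exEnt_div_choose_mem_Icc hk (P n)), fun m n hm hmn => hmono hm (hm.trans hmn) hmn, hlim⟩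

/-- Existence of the entropy density (Proposition 2.11). -/
theorem entropy_density_exists (k : ℕ) (hk : 2 ≤ k)
    (P : ∀ n, Set (Colouring k n)) (hP : OrderHereditary P)
    (hne : ∀ n, (P n).Nonempty) :
    ∃ π : ℝ, π ∈ Set.Icc (0 : ℝ) 1 ∧
      (∀ m n : ℕ, 2 ≤ m → m ≤ n →
        exEnt (P n) / (n.choose 2 : ℝ) ≤ exEnt (P m) / (m.choose 2 : ℝ)) ∧
      Tendsto (fun n => exEnt (P n) / (n.choose 2 : ℝ)) atTop (nhds π) :=
  entropy_density_exists_general k hk P hP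
end

section
/- Approximation of general order-hereditary properties: Let k ≥ 2 and let P be an order-hereditary property of k-colourings with P_n ≠ ∅ for every n ∈ ℕ, and let ε > 0. There exist N, n₀ ∈ ℕ and a family F of k-colourings of K_N such that for all n ≥ n₀: (i) P_n ⊆ Forb(F)_n, and (ii) |Forb(F)_n| ≤ |P_n| · k^{ε·C(n,2)}. -/
/-!
For an order-hereditary `Q`, the density `log |Q_n| / C(n,2)` is non-increasing for `n ≥ 2`:
cover the edges of `K_{n+1}` by its `n + 1` vertex-deleted copies of `K_n`, each edge covered
`n - 1` times, and apply Shearer's lemma to the entropy of a uniform element of `Q_{n+1}`, giving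
`|Q_{n+1}|^{n-1} ≤ |Q_n|^{n+1}`. Pick `N` whose density for `P` is within `ε log k` of the
infimum, and let `F` be the colourings of `K_N` outside `P_N`. Then `Forb F` is order-hereditary,
contains `P`, and is contained in `P` at level `N`, so for `n ≥ N` its density is at most that of
`P_N`, hence within `ε log k` of that of `P_n`.
-/

open Filter

open Finset

section Submodular

variable {α : Type*} [DecidableEq α]

def Submodular (f : Finset α → ℝ) : Prop :=
  ∀ s t, f (s ∪ t) + f (s ∩ t) ≤ f s + f t

variable [Fintype α] [LinearOrder α] {f : Finset α → ℝ}

def marginal (f : Finset α → ℝ) (a : α) : ℝ :=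
  f (insert a ({x | x < a} : Finset α)) - f {x | x < a}

lemma Submodular.marginal_le (hf : Submodular f) {a : α} {s : Finset α}
    (hs : ∀ x ∈ s, x < a) :
    marginal f a ≤ f (insert a s) - f s := by
  have hsub : s ⊆ ({x | x < a} : Finset α) := fun x hx => by simpa using hs x hx
  have ha : a ∉ ({x | x < a} : Finset α) := by simp
  have := hf {x | x < a} (insert a s)
  rw [union_insert, union_eq_left.2 hsub, inter_insert_of_notMem ha,
    inter_eq_right.2 hsub] at this
  unfold marginal
  linarith

lemma Submodular.sum_marginal_le (hf : Submodular f) (s : Finset α) :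
    ∑ a ∈ s, marginal f a ≤ f s - f ∅ := by
  induction s using Finset.induction_on_max with
  | empty => simp
  | insert a s hs ih =>
    rw [sum_insert fun ha => (hs a ha).false]
    linarith [hf.marginal_le hs]

lemma sum_marginal_of_isLowerSet (f : Finset α → ℝ) {s : Finset α}
    (hs : IsLowerSet (s : Set α)) :
    ∑ a ∈ s, marginal f a = f s - f ∅ := by
  induction s using Finset.induction_on_max with
  | empty => simp
  | insert a s hlt ih =>
    have hbelow : ({x | x < a} : Finset α) = s := by
      ext x
      simp only [mem_filter, mem_univ, true_and]
      refine ⟨fun hx => ?_, hlt x⟩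
      have := hs hx.le (mem_insert_self a s)
      exact (mem_insert.1 this).resolve_left hx.ne
    have hlower : IsLowerSet (s : Set α) := fun x y hyx hx =>
      (mem_insert.1 (hs hyx (mem_insert_of_mem hx))).resolve_left (hyx.trans_lt (hlt x hx)).ne
    rw [sum_insert fun ha => (hlt a ha).false, ih hlower, marginal, hbelow]
    ring

end Submodular

/-- Shearer's lemma for submodular set functions: along any linear order, `f univ - f ∅` is the
sum of the marginals, while by submodularity `f (S i) - f ∅` dominates their sum over `S i`. -/
theorem Submodular.mul_sub_le_sum {α ι : Type*} [DecidableEq α] [Fintype α]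
    {f : Finset α → ℝ} (hf : Submodular f) (S : ι → Finset α) (I : Finset ι) (r : ℕ)
    (hr : ∀ a, #{i ∈ I | a ∈ S i} = r) :
    r * (f univ - f ∅) ≤ ∑ i ∈ I, (f (S i) - f ∅) := by
  let _ : LinearOrder α := LinearOrder.lift' _ (Fintype.equivFin α).injective
  calc r * (f univ - f ∅) = ∑ a, ∑ i ∈ I with a ∈ S i, marginal f a := by
        simp only [sum_const, hr, nsmul_eq_mul, ← mul_sum,
          sum_marginal_of_isLowerSet f (s := univ) (by simpa using isLowerSet_univ)]
    _ = ∑ i ∈ I, ∑ a ∈ S i, marginal f a :=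
        sum_comm' (by simp only [mem_univ, mem_filter]; tauto)
    _ ≤ ∑ i ∈ I, (f (S i) - f ∅) := sum_le_sum fun i _ => hf.sum_marginal_le (S i)

lemma sum_log_nonpos_of_sum_le {γ : Type*} {s : Finset γ} {x : γ → ℝ}
    (hx : ∀ a ∈ s, 0 < x a) (hsum : ∑ a ∈ s, x a ≤ #s) : ∑ a ∈ s, Real.log (x a) ≤ 0 :=
  calc ∑ a ∈ s, Real.log (x a) ≤ ∑ a ∈ s, (x a - 1) :=
        sum_le_sum fun a ha => Real.log_le_sub_one_of_pos (hx a ha)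
    _ ≤ 0 := by simpa [sum_sub_distrib] using hsum

section ProjEntropy

variable {ι β : Type*} [DecidableEq β] (A : Finset (ι → β)) (S T : Finset ι) {a b c : ι → β}

def agreeOn (a : ι → β) : Finset (ι → β) := {b ∈ A | ∀ i ∈ S, b i = a i}

/-- `#A` times the Shannon entropy (in nats) of the restriction to `S` of a uniformly random
element of `A`. -/
noncomputable def projEntropy : ℝ := ∑ a ∈ A, Real.log (#A / #(agreeOn A S a))

variable {A S T}

lemma mem_agreeOn : b ∈ agreeOn A S a ↔ b ∈ A ∧ ∀ i ∈ S, b i = a i := mem_filter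

lemma self_mem_agreeOn (ha : a ∈ A) : a ∈ agreeOn A S a := mem_agreeOn.2 ⟨ha, fun _ _ => rfl⟩

lemma card_agreeOn_pos (ha : a ∈ A) : 0 < #(agreeOn A S a) :=
  card_pos.2 ⟨a, self_mem_agreeOn ha⟩

lemma mem_agreeOn_comm (ha : a ∈ A) (hb : b ∈ A) : b ∈ agreeOn A S a ↔ a ∈ agreeOn A S b := by
  simp only [mem_agreeOn, ha, hb, true_and]
  exact ⟨fun h i hi => (h i hi).symm, fun h i hi => (h i hi).symm⟩

lemma agreeOn_eq_of_mem (hb : b ∈ agreeOn A S a) : agreeOn A S b = agreeOn A S a := by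
  ext x
  simp only [mem_agreeOn] at hb ⊢
  exact and_congr_right fun _ => forall₂_congr fun i hi => by rw [hb.2 i hi]

lemma agreeOn_anti (h : S ⊆ T) : agreeOn A T a ⊆ agreeOn A S a := fun _ hb =>
  mem_agreeOn.2 ⟨(mem_agreeOn.1 hb).1, fun i hi => (mem_agreeOn.1 hb).2 i (h hi)⟩

lemma agreeOn_empty : agreeOn A ∅ a = A := by simp [agreeOn]

lemma log_card_div_card_agreeOn (ha : a ∈ A) :
    Real.log (#A / #(agreeOn A S a)) = Real.log #A - Real.log #(agreeOn A S a) :=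
  Real.log_div (by exact_mod_cast (card_pos.2 ⟨a, ha⟩).ne')
    (by exact_mod_cast (card_agreeOn_pos ha).ne')

lemma projEntropy_empty : projEntropy A ∅ = 0 := by
  simp [projEntropy, agreeOn_empty]

lemma sum_inv_card_agreeOn_le {γ : Type*} [DecidableEq γ] (r : (ι → β) → γ)
    (hr : ∀ a ∈ A, ∀ b ∈ A, r a = r b ↔ ∀ i ∈ S, a i = b i) (B : Finset γ)
    (hB : ∀ a ∈ A, r a ∈ B) : ∑ a ∈ A, (#(agreeOn A S a) : ℝ)⁻¹ ≤ #B := by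
  have hfiber : ∀ a ∈ A, agreeOn A S a = {b ∈ A | r b = r a} := fun a ha => by
    ext b
    simp only [mem_agreeOn, mem_filter]
    exact and_congr_right fun hb => by rw [hr b hb a ha]
  rw [← sum_fiberwise_of_maps_to hB, card_eq_sum_ones, Nat.cast_sum]
  refine sum_le_sum fun y _ => ?_
  rw [sum_congr rfl fun a ha => by rw [hfiber a (mem_filter.1 ha).1, (mem_filter.1 ha).2],
    sum_const, nsmul_eq_mul, Nat.cast_one]
  exact mul_inv_le_one

theorem projEntropy_le {γ : Type*} [DecidableEq γ] (r : (ι → β) → γ)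
    (hr : ∀ a ∈ A, ∀ b ∈ A, r a = r b ↔ ∀ i ∈ S, a i = b i) (B : Finset γ)
    (hB : ∀ a ∈ A, r a ∈ B) : projEntropy A S ≤ #A * Real.log #B := by
  obtain rfl | ⟨a₀, ha₀⟩ := A.eq_empty_or_nonempty
  · simp [projEntropy]
  have hBpos : (0 : ℝ) < #B := by exact_mod_cast card_pos.2 ⟨r a₀, hB a₀ ha₀⟩
  have hApos : (0 : ℝ) < #A := by exact_mod_cast card_pos.2 ⟨a₀, ha₀⟩
  have hpos : ∀ a ∈ A, (0 : ℝ) < #(agreeOn A S a) := fun a ha => by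
    exact_mod_cast card_agreeOn_pos ha
  have key := sum_log_nonpos_of_sum_le (s := A) (x := fun a => #A / (#B * #(agreeOn A S a)))
    (fun a ha => div_pos hApos (mul_pos hBpos (hpos a ha))) (by
      calc ∑ a ∈ A, (#A : ℝ) / (#B * #(agreeOn A S a))
          = #A / #B * ∑ a ∈ A, (#(agreeOn A S a) : ℝ)⁻¹ := by
            rw [mul_sum]; exact sum_congr rfl fun a _ => by field_simp
        _ ≤ #A / #B * #B := by gcongr; exact sum_inv_card_agreeOn_le r hr B hB
        _ = #A := div_mul_cancel₀ _ hBpos.ne')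
  rw [sum_congr rfl fun a ha => by
    rw [Real.log_div hApos.ne' (mul_pos hBpos (hpos a ha)).ne',
      Real.log_mul hBpos.ne' (hpos a ha).ne']] at key
  simp only [projEntropy, sum_congr rfl fun a ha => log_card_div_card_agreeOn (S := S) ha]
  simp only [sum_sub_distrib, sum_add_distrib, sum_const, nsmul_eq_mul] at key ⊢
  linarith

variable [Fintype ι]

lemma agreeOn_univ (ha : a ∈ A) : agreeOn A univ a = {a} := by
  ext b
  simp only [mem_agreeOn, mem_univ, true_implies, mem_singleton]
  exact ⟨fun h => funext h.2, by rintro rfl; exact ⟨ha, fun _ => rfl⟩⟩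

lemma projEntropy_univ : projEntropy A univ = #A * Real.log #A := by
  rw [projEntropy, sum_congr rfl fun a ha => by rw [agreeOn_univ ha, card_singleton,
    Nat.cast_one, div_one], sum_const, nsmul_eq_mul]

variable [DecidableEq ι]

lemma agreeOn_union : agreeOn A (S ∪ T) a = agreeOn A S a ∩ agreeOn A T a := by
  ext b
  simp only [mem_inter, mem_agreeOn, mem_union]
  grind

lemma agreeOn_inter_agreeOn (ha : a ∈ agreeOn A S b ∩ agreeOn A T c) :
    agreeOn A S b ∩ agreeOn A T c = agreeOn A (S ∪ T) a := by
  obtain ⟨haS, haT⟩ := mem_inter.1 ha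
  rw [agreeOn_union, agreeOn_eq_of_mem haS, agreeOn_eq_of_mem haT]

lemma sum_inv_card_mul_card_le :
    ∑ a ∈ agreeOn A S b ∩ agreeOn A T c,
        ((#(agreeOn A (S ∪ T) a) : ℝ) * #(agreeOn A (S ∩ T) a))⁻¹
      ≤ (#(agreeOn A (S ∩ T) b) : ℝ)⁻¹ := by
  set W := agreeOn A S b ∩ agreeOn A T c
  obtain hW | ⟨a₀, ha₀⟩ := W.eq_empty_or_nonempty
  · simp [hW]
  have hcard : ∀ a ∈ W, #(agreeOn A (S ∪ T) a) = #W ∧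
      #(agreeOn A (S ∩ T) a) = #(agreeOn A (S ∩ T) b) := fun a ha =>
    ⟨by rw [← agreeOn_inter_agreeOn ha],
      by rw [agreeOn_eq_of_mem (agreeOn_anti inter_subset_left (mem_inter.1 ha).1)]⟩
  rw [sum_congr rfl fun a ha => by rw [(hcard a ha).1, (hcard a ha).2], sum_const,
    nsmul_eq_mul, mul_inv, ← mul_assoc]
  exact mul_le_of_le_one_left (by positivity) mul_inv_le_one

lemma sum_inv_card_mul_card_eq_zero_of_notMem (hc : c ∉ agreeOn A (S ∩ T) b)
    (hcA : c ∈ A) :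
    ∑ a ∈ agreeOn A S b ∩ agreeOn A T c,
        ((#(agreeOn A (S ∪ T) a) : ℝ) * #(agreeOn A (S ∩ T) a))⁻¹ = 0 := by
  refine sum_eq_zero fun a ha => absurd ?_ hc
  obtain ⟨haS, haT⟩ := mem_inter.1 ha
  rw [← agreeOn_eq_of_mem (agreeOn_anti inter_subset_left haS),
    agreeOn_eq_of_mem (agreeOn_anti inter_subset_right haT)]
  exact self_mem_agreeOn hcA

/-- Double count the triples `(a, b, c)` with `b ≡ a` on `S` and `a ≡ c` on `T`: for fixed
`b, c` the admissible `a` form a single `(S ∪ T)`-class, and they exist only if `b ≡ c` on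
`S ∩ T`. -/
lemma sum_card_mul_card_div_card_mul_card_le :
    ∑ a ∈ A, ((#(agreeOn A S a) : ℝ) * #(agreeOn A T a)) /
        (#(agreeOn A (S ∪ T) a) * #(agreeOn A (S ∩ T) a)) ≤ #A := by
  set w : (ι → β) → ℝ := fun a =>
    ((#(agreeOn A (S ∪ T) a) : ℝ) * #(agreeOn A (S ∩ T) a))⁻¹
  calc ∑ a ∈ A, ((#(agreeOn A S a) : ℝ) * #(agreeOn A T a)) /
          (#(agreeOn A (S ∪ T) a) * #(agreeOn A (S ∩ T) a))
      = ∑ a ∈ A, ∑ _p ∈ agreeOn A S a ×ˢ agreeOn A T a, w a := by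
        simp [w, div_eq_mul_inv, card_product]
    _ = ∑ p ∈ A ×ˢ A, ∑ a ∈ agreeOn A S p.1 ∩ agreeOn A T p.2, w a := by
        refine sum_comm' fun a p => ?_
        simp only [mem_product, mem_inter]
        constructor
        · rintro ⟨ha, hb, hc⟩
          have hbA := (mem_agreeOn.1 hb).1
          have hcA := (mem_agreeOn.1 hc).1
          exact ⟨⟨(mem_agreeOn_comm ha hbA).1 hb, (mem_agreeOn_comm ha hcA).1 hc⟩, hbA, hcA⟩
        · rintro ⟨⟨hb, hc⟩, hbA, hcA⟩
          have ha := (mem_agreeOn.1 hb).1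
          exact ⟨ha, (mem_agreeOn_comm hbA ha).1 hb, (mem_agreeOn_comm hcA ha).1 hc⟩
    _ = ∑ b ∈ A, ∑ c ∈ agreeOn A (S ∩ T) b, ∑ a ∈ agreeOn A S b ∩ agreeOn A T c, w a := by
        rw [sum_product]
        refine sum_congr rfl fun b _ =>
          (sum_subset (fun c hc => (mem_agreeOn.1 hc).1) fun c hcA hc => ?_).symm
        exact sum_inv_card_mul_card_eq_zero_of_notMem hc hcA
    _ ≤ ∑ b ∈ A, ∑ _c ∈ agreeOn A (S ∩ T) b, (#(agreeOn A (S ∩ T) b) : ℝ)⁻¹ :=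
        sum_le_sum fun b _ => sum_le_sum fun c _ => sum_inv_card_mul_card_le
    _ = #A := by
        rw [card_eq_sum_ones, Nat.cast_sum]
        refine sum_congr rfl fun b hb => ?_
        rw [sum_const, nsmul_eq_mul, Nat.cast_one,
          mul_inv_cancel₀ (Nat.cast_ne_zero.2 (card_agreeOn_pos hb).ne')]

theorem projEntropy_submodular : Submodular (projEntropy A) := by
  intro S T
  have hpos : ∀ a ∈ A, ∀ U : Finset ι, (0 : ℝ) < #(agreeOn A U a) := fun a ha U => by
    exact_mod_cast card_agreeOn_pos ha
  have key := sum_log_nonpos_of_sum_le (fun a ha =>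
      div_pos (mul_pos (hpos a ha S) (hpos a ha T)) (mul_pos (hpos a ha _) (hpos a ha _)))
    (sum_card_mul_card_div_card_mul_card_le (A := A) (S := S) (T := T))
  rw [sum_congr rfl fun a ha => by
    rw [Real.log_div (mul_pos (hpos a ha S) (hpos a ha T)).ne'
        (mul_pos (hpos a ha _) (hpos a ha _)).ne',
      Real.log_mul (hpos a ha S).ne' (hpos a ha T).ne',
      Real.log_mul (hpos a ha _).ne' (hpos a ha _).ne']] at key
  simp only [projEntropy, ← sum_add_distrib]
  rw [← sub_nonpos, ← sum_sub_distrib]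
  refine le_of_eq_of_le (sum_congr rfl fun a ha => ?_) key
  simp only [log_card_div_card_agreeOn ha]
  ring

end ProjEntropy

section VertexDeletion

variable {k n : ℕ}

def edgesAvoiding (v : Fin (n + 1)) : Finset (Edge (n + 1)) := {e | e.1.1 ≠ v ∧ e.1.2 ≠ v}

lemma card_filter_mem_edgesAvoiding (e : Edge (n + 1)) :
    #{v | e ∈ edgesAvoiding v} = n - 1 := by
  have h : ({v | e ∈ edgesAvoiding v} : Finset (Fin (n + 1))) = univ \ {e.1.1, e.1.2} := by
    ext v
    simp [edgesAvoiding, eq_comm]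
  rw [h, card_sdiff_of_subset (subset_univ _), card_pair e.2.ne, card_univ, Fintype.card_fin]
  omega

lemma restrictC_succAbove_eq_iff (v : Fin (n + 1)) {a b : Colouring k (n + 1)} :
    restrictC a v.succAbove (Fin.strictMono_succAbove v) =
        restrictC b v.succAbove (Fin.strictMono_succAbove v) ↔
      ∀ e ∈ edgesAvoiding v, a e = b e := by
  refine ⟨fun h e he => ?_, fun h => funext fun e => h _ ?_⟩
  · obtain ⟨⟨p, q⟩, hpq⟩ := e
    obtain ⟨hp, hq⟩ : p ≠ v ∧ q ≠ v := by simpa [edgesAvoiding] using he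
    obtain ⟨i, rfl⟩ := Fin.exists_succAbove_eq hp
    obtain ⟨j, rfl⟩ := Fin.exists_succAbove_eq hq
    exact congrFun h ⟨(i, j), (Fin.strictMono_succAbove v).lt_iff_lt.1 hpq⟩
  · simp [edgesAvoiding, Edge.map, Fin.succAbove_ne]

/-- Shearer's inequality for the `n + 1` copies of `K_n` in `K_{n+1}`, each edge lying in
`n - 1` of them: `#A ^ (n - 1) ≤ #B ^ (n + 1)`, in logarithmic form. -/
theorem log_card_le_of_restrictC_succAbove_mem (A : Finset (Colouring k (n + 1)))
    (B : Finset (Colouring k n))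
    (hAB : ∀ c ∈ A, ∀ v, restrictC c v.succAbove (Fin.strictMono_succAbove v) ∈ B) :
    ((n - 1 : ℕ) : ℝ) * Real.log #A ≤ (n + 1) * Real.log #B := by
  have hv : ∀ v, projEntropy A (edgesAvoiding v) ≤ #A * Real.log #B := fun v =>
    projEntropy_le _ (fun _ _ _ _ => restrictC_succAbove_eq_iff v) B fun c hc => hAB c hc v
  have h := (projEntropy_submodular (A := A)).mul_sub_le_sum edgesAvoiding univ (n - 1)
    card_filter_mem_edgesAvoiding
  simp only [projEntropy_univ, projEntropy_empty, sub_zero] at h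
  have h' := h.trans (sum_le_sum fun v _ => hv v)
  rw [sum_const, card_univ, Fintype.card_fin, nsmul_eq_mul, Nat.cast_add, Nat.cast_one] at h'
  obtain hA | hA := (Nat.zero_le #A).eq_or_lt
  · rw [← hA, Nat.cast_zero, Real.log_zero, mul_zero]
    exact mul_nonneg (by positivity) (Real.log_natCast_nonneg _)
  have hA' : (0 : ℝ) < #A := by exact_mod_cast hA
  nlinarith

end VertexDeletion

section Hereditary

variable {k : ℕ} {P : ∀ n, Set (Colouring k n)}

lemma OrderHereditary.log_ncard_div_choose_succ_le (hP : OrderHereditary P) {n : ℕ}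
    (hn : 2 ≤ n) :
    Real.log (P (n + 1)).ncard / (n + 1).choose 2 ≤ Real.log (P n).ncard / n.choose 2 := by
  classical
  have h := log_card_le_of_restrictC_succAbove_mem (P (n + 1)).toFinset (P n).toFinset
    fun c hc v => Set.mem_toFinset.2 (hP n (n + 1) _ _ c (Set.mem_toFinset.1 hc))
  rw [← Set.ncard_eq_toFinset_card', ← Set.ncard_eq_toFinset_card', Nat.cast_sub (by omega),
    Nat.cast_one] at h
  have hn' : (2 : ℝ) ≤ n := by exact_mod_cast hn
  rw [Nat.cast_choose_two, Nat.cast_choose_two, div_le_div_iff₀ (by push_cast; nlinarith)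
    (by nlinarith), Nat.cast_add_one, add_sub_cancel_right]
  nlinarith [Real.log_natCast_nonneg (P n).ncard]

lemma OrderHereditary.log_ncard_div_choose_le (hP : OrderHereditary P) {m n : ℕ}
    (hm : 2 ≤ m) (hmn : m ≤ n) :
    Real.log (P n).ncard / n.choose 2 ≤ Real.log (P m).ncard / m.choose 2 := by
  induction n, hmn using Nat.le_induction with
  | base => rfl
  | succ n hmn ih => exact (hP.log_ncard_div_choose_succ_le (hm.trans hmn)).trans ih

lemma orderHereditary_forb {N : ℕ} (F : Set (Colouring k N)) : OrderHereditary (Forb F) :=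
  fun _ _ φ hφ _ hc ψ hψ => hc (φ ∘ ψ) (hφ.comp hψ)

lemma OrderHereditary.subset_forb_compl (hP : OrderHereditary P) (N n : ℕ) :
    P n ⊆ Forb (P N)ᶜ n := fun c hc φ hφ => not_not.2 (hP N n φ hφ c hc)

lemma forb_compl_subset {N : ℕ} (F : Set (Colouring k N)) : Forb Fᶜ N ⊆ F :=
  fun _ hc => not_not.1 (hc id strictMono_id)

lemma OrderHereditary.log_ncard_forb_compl_div_choose_le (hP : OrderHereditary P) {N n : ℕ}
    (hN : 2 ≤ N) (hNn : N ≤ n) (hne : (P N).Nonempty) :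
    Real.log (Forb (P N)ᶜ n).ncard / n.choose 2 ≤ Real.log (P N).ncard / N.choose 2 := by
  refine ((orderHereditary_forb _).log_ncard_div_choose_le hN hNn).trans ?_
  gcongr
  · exact_mod_cast (Set.ncard_pos (Set.toFinite _)).2 (hne.mono (hP.subset_forb_compl N N))
  · exact Set.toFinite _
  · exact forb_compl_subset _

end Hereditary

lemma le_mul_rpow_of_log_div_le {x y b c ε : ℝ} (hx : 0 < x) (hy : 0 < y) (hb : 0 < b)
    (hc : 0 < c) (h : Real.log x / c ≤ Real.log y / c + ε * Real.log b) :
    x ≤ y * b ^ (ε * c) := by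
  rw [← sub_le_iff_le_add', ← sub_div, div_le_iff₀ hc] at h
  rw [← Real.log_le_log_iff hx (by positivity), Real.log_mul hy.ne' (by positivity),
    Real.log_rpow hb]
  linarith

/-- Approximation of general order-hereditary properties (Theorem 2.15). -/
theorem approximation_of_hereditary (k : ℕ) (hk : 2 ≤ k)
    (P : ∀ n, Set (Colouring k n)) (hP : OrderHereditary P)
    (hne : ∀ n, (P n).Nonempty) (ε : ℝ) (hε : 0 < ε) :
    ∃ (N n₀ : ℕ) (F : Set (Colouring k N)), ∀ n, n₀ ≤ n →
      P n ⊆ Forb F n ∧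
      ((Forb F n).ncard : ℝ) ≤ ((P n).ncard : ℝ) * (k : ℝ) ^ (ε * (n.choose 2 : ℝ)) := by
  let d : ℕ → ℝ := fun m => Real.log (P m).ncard / m.choose 2
  have hlogk : 0 < Real.log k := Real.log_pos (by exact_mod_cast hk)
  have hbdd : BddBelow (Set.range fun m => d (m + 2)) :=
    ⟨0, by rintro _ ⟨m, rfl⟩; exact div_nonneg (Real.log_natCast_nonneg _) (Nat.cast_nonneg _)⟩
  obtain ⟨N, hN⟩ := exists_lt_of_ciInf_lt (f := fun m => d (m + 2))
    (lt_add_of_pos_right _ (mul_pos hε hlogk))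
  refine ⟨N + 2, N + 2, (P (N + 2))ᶜ, fun n hn => ⟨hP.subset_forb_compl _ n, ?_⟩⟩
  have hpos : ∀ {m} {s : Set (Colouring k m)}, s.Nonempty → (0 : ℝ) < s.ncard := fun hs => by
    exact_mod_cast (Set.ncard_pos (Set.toFinite _)).2 hs
  apply le_mul_rpow_of_log_div_le (hpos ((hne n).mono (hP.subset_forb_compl _ n)))
    (hpos (hne n)) (by positivity) (by exact_mod_cast Nat.choose_pos (by omega))
  have hinf : ⨅ m, d (m + 2) ≤ d n := by
    simpa [show n - 2 + 2 = n by omega] using ciInf_le hbdd (n - 2)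
  linarith [hP.log_ncard_forb_compl_div_choose_le (by omega) hn (hne (N + 2))]
end

section
/- Universal lemma for entropy-dense templates: Let P be a hereditary property of graphs, let r ≥ 2, ℓ ≥ 1 and ε > 0. There exists n₀ = n₀(P, r, ℓ, ε) such that if n ≥ n₀ and t is a 2-colouring template for K_n (colour 1 encoding non-edges and colour 2 encoding edges) such that every realisation of t, regarded as a graph, lies in P_n, and Ent(t) ≥ (1 − 1/r + ε)·C(n,2), then there exists v ∈ {0,1}^{r+1} with H(r+1, v)_ℓ ⊆ P. -/
open Filter

/-- A graph property (closed under isomorphism) is hereditary if it is symmetric and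
closed under taking induced subgraphs; equivalently, it is closed under pulling back
along arbitrary injections of vertex sets. -/
def GraphHereditary (P : ∀ n, Set (SimpleGraph (Fin n))) : Prop :=
  ∀ (m n : ℕ) (f : Fin m ↪ Fin n) (G : SimpleGraph (Fin n)),
    G ∈ P n → G.comap f ∈ P m

/-- The graph on `[n]` associated to a 2-colouring of `E(K_n)`: the edges are the pairs
of colour `1` (with colour `0` encoding non-edges). -/
def colouringGraph {n : ℕ} (c : Colouring 2 n) : SimpleGraph (Fin n) :=
  SimpleGraph.fromRel (fun x y => ∃ h : x < y, c ⟨(x, y), h⟩ = 1)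

/-- `G` belongs to the class `H(r, v)_ℓ`: its vertex set can be partitioned into `r` parts
each of size at most `ℓ`, the `i`-th part inducing a complete graph if `v i = true` and
an empty graph if `v i = false` (edges between different parts being arbitrary). -/
def InHl {r m : ℕ} (ℓ : ℕ) (v : Fin r → Bool) (G : SimpleGraph (Fin m)) : Prop :=
  ∃ f : Fin m → Fin r, (∀ i : Fin r, ({x : Fin m | f x = i}).ncard ≤ ℓ) ∧
    ∀ x y : Fin m, x ≠ y → f x = f y → (G.Adj x y ↔ v (f x) = true)

/-!
The free pairs of `t`, on which both colours are allowed, number `Ent t ≥ (1 - 1/r + ε) C(n,2)`.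
Deleting vertices of low free degree leaves a large set in which every vertex has free degree at
least `(1 - 1/r + ε/2)` times its size, so by the minimum-degree Erdős–Stone theorem the free
graph contains a complete `(r+1)`-partite graph with large parts. Ramsey's theorem, applied inside
each part to the pairs allowing colour `1`, shrinks every part to `ℓ` vertices on which `t`
allows one common colour. Every graph of `H(r+1, v)_ℓ` is then induced, in some realisation of
`t`, on a subset of these vertices, and heredity puts it in `P`.
-/

open Finset SimpleGraph

namespace SimpleGraph

variable {V : Type*} {G : SimpleGraph V}

protected lemma IsNIndepSet.insert [DecidableEq V] {s : Finset V} {a : V} {n : ℕ}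
    (hs : G.IsNIndepSet n s) (h : ∀ b ∈ s, a ≠ b ∧ ¬G.Adj a b) :
    G.IsNIndepSet (n + 1) (insert a s) := by
  rw [← isNClique_compl] at hs ⊢
  exact hs.insert fun b hb => (compl_adj G a b).2 (h b hb)

theorem exists_isNClique_or_isNIndepSet (k l : ℕ) :
    ∃ N, ∀ {V : Type*} (G : SimpleGraph V) (s : Finset V), N ≤ #s →
      ∃ t ⊆ s, G.IsNClique k t ∨ G.IsNIndepSet l t := by
  classical
  induction k generalizing l with
  | zero => exact ⟨0, fun _ _ _ => ⟨∅, empty_subset _, .inl (by simp [isNClique_iff])⟩⟩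
  | succ k ihk =>
    induction l with
    | zero =>
      exact ⟨0, fun _ _ _ => ⟨∅, empty_subset _, .inr (by simp [isNIndepSet_iff])⟩⟩
    | succ l ihl =>
      obtain ⟨N₁, hN₁⟩ := ihk (l + 1)
      obtain ⟨N₂, hN₂⟩ := ihl
      refine ⟨N₁ + N₂ + 1, fun {V} G s hs => ?_⟩
      obtain ⟨v, hv⟩ : s.Nonempty := card_pos.mp (by omega)
      have hsplit : #{w ∈ s.erase v | G.Adj v w} + #{w ∈ s.erase v | ¬G.Adj v w} = #s - 1 := by
        rw [card_filter_add_card_filter_not, card_erase_of_mem hv]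
      have hvs : ∀ {p : V → Prop} [DecidablePred p], {w ∈ s.erase v | p w} ⊆ s :=
        fun {_ _} => (filter_subset _ _).trans (erase_subset _ _)
      have hmem : ∀ {p : V → Prop} [DecidablePred p] {t}, t ⊆ {w ∈ s.erase v | p w} →
          ∀ w ∈ t, v ≠ w ∧ p w := fun ht w hw => by
        have := mem_filter.1 (ht hw)
        exact ⟨(ne_of_mem_erase this.1).symm, this.2⟩
      by_cases hbig : N₁ ≤ #{w ∈ s.erase v | G.Adj v w}
      · obtain ⟨t, ht, hkt | hlt⟩ := hN₁ G _ hbig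
        · exact ⟨insert v t, insert_subset hv (ht.trans hvs),
            .inl (hkt.insert fun w hw => (hmem ht w hw).2)⟩
        · exact ⟨t, ht.trans hvs, .inr hlt⟩
      · obtain ⟨t, ht, hkt | hlt⟩ := hN₂ G {w ∈ s.erase v | ¬G.Adj v w} (by omega)
        · exact ⟨t, ht.trans hvs, .inl hkt⟩
        · exact ⟨insert v t, insert_subset hv (ht.trans hvs), .inr (hlt.insert (hmem ht))⟩

theorem exists_embedding_forall_adj_iff (ℓ : ℕ) :
    ∃ N, ∀ G : SimpleGraph (Fin N), ∃ (b : Bool) (e : Fin ℓ ↪ Fin N),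
      ∀ x y, x ≠ y → (G.Adj (e x) (e y) ↔ b = true) := by
  obtain ⟨N, hN⟩ := exists_isNClique_or_isNIndepSet ℓ ℓ
  refine ⟨N, fun G => ?_⟩
  obtain ⟨s, -, hs | hs⟩ := hN G univ (by simp)
  · refine ⟨true, (s.orderEmbOfFin hs.card_eq).toEmbedding, fun x y hxy => iff_of_true ?_ rfl⟩
    exact hs.isClique (s.orderEmbOfFin_mem _ x) (s.orderEmbOfFin_mem _ y) (by simpa using hxy)
  · refine ⟨false, (s.orderEmbOfFin hs.card_eq).toEmbedding, fun x y hxy => iff_of_false ?_ ?_⟩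
    · exact hs.isIndepSet (s.orderEmbOfFin_mem _ x) (s.orderEmbOfFin_mem _ y) (by simpa using hxy)
    · exact Bool.false_ne_true

section Cleaning

variable [DecidableRel G.Adj]

lemma sum_card_filter_adj_eq_erase [DecidableEq V] {s : Finset V} {v : V} (hv : v ∈ s) :
    ∑ u ∈ s, #{w ∈ s | G.Adj u w} =
      ∑ u ∈ s.erase v, #{w ∈ s.erase v | G.Adj u w} + 2 * #{w ∈ s | G.Adj v w} := by
  have hdeg : ∀ u ∈ s.erase v, #{w ∈ s | G.Adj u w} =
      #{w ∈ s.erase v | G.Adj u w} + if G.Adj v u then 1 else 0 := by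
    intro u _
    rw [← insert_erase hv, filter_insert, insert_erase hv]
    simp only [G.adj_comm u v]
    split_ifs with h
    · exact card_insert_of_notMem fun h' => notMem_erase v s (mem_of_mem_filter v h')
    · rfl
  have hnbr : {w ∈ s.erase v | G.Adj v w} = {w ∈ s | G.Adj v w} := by
    rw [filter_erase, erase_eq_of_notMem fun h => G.irrefl (mem_filter.1 h).2]
  rw [← add_sum_erase s _ hv, sum_congr rfl hdeg, sum_add_distrib, sum_boole, Nat.cast_id, hnbr]
  ring

/-- Deleting a vertex of degree below `c * #s` inside `s` raises `∑ deg - c * #s * (#s + 1)`;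
as `∑ deg ≤ #s ^ 2`, this potential staying above `k ^ 2` keeps the set larger than `k`. -/
theorem exists_subset_forall_mul_card_le_card_adj {c : ℝ} (hc : 0 ≤ c) (k : ℕ) :
    ∀ s : Finset V, c * #s * (#s + 1) + k ^ 2 < ∑ v ∈ s, (#{w ∈ s | G.Adj v w} : ℝ) →
      ∃ s' ⊆ s, k < #s' ∧ ∀ v ∈ s', c * #s' ≤ #{w ∈ s' | G.Adj v w} := by
  classical
  intro s
  induction s using strongInduction with
  | H s ih =>
    intro hs
    by_cases hmin : ∀ v ∈ s, c * #s ≤ #{w ∈ s | G.Adj v w}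
    · refine ⟨s, Subset.rfl, ?_, hmin⟩
      have hsum : ∑ v ∈ s, (#{w ∈ s | G.Adj v w} : ℝ) ≤ (#s : ℝ) ^ 2 := by
        rw [sq, ← nsmul_eq_mul, ← sum_const]
        exact sum_le_sum fun v _ => mod_cast card_filter_le s _
      have : (k : ℝ) ^ 2 < (#s : ℝ) ^ 2 := by
        nlinarith [mul_nonneg (mul_nonneg hc (#s).cast_nonneg) (#s).cast_nonneg]
      exact_mod_cast lt_of_pow_lt_pow_left₀ 2 (#s).cast_nonneg this
    · push Not at hmin
      obtain ⟨v, hv, hlow⟩ := hmin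
      obtain ⟨s', hs's, hk, hs'⟩ := ih (s.erase v) (erase_ssubset hv) (by
        have hsum := congrArg (Nat.cast (R := ℝ)) (sum_card_filter_adj_eq_erase (G := G) hv)
        push_cast at hsum
        rw [cast_card_erase_of_mem hv]
        nlinarith)
      exact ⟨s', hs's.trans (erase_subset v s), hk, hs'⟩

end Cleaning

theorem exists_completeEquipartiteGraph_isContained_of_forall_le_card_adj {ε : ℝ} (hε : 0 < ε)
    (r t : ℕ) : ∃ N, ∀ {V : Type*} (G : SimpleGraph V) [DecidableRel G.Adj] (s : Finset V),
      N ≤ #s → (∀ v ∈ s, (1 - 1 / r + ε) * #s ≤ #{w ∈ s | G.Adj v w}) →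
        completeEquipartiteGraph (r + 1) t ⊑ G := by
  obtain ⟨N, hN⟩ := eventually_atTop.1
    (eventually_completeEquipartiteGraph_isContained_of_minDegree hε r t)
  refine ⟨max N 1, fun {V} G _ s hs hdeg => ?_⟩
  classical
  let f : Fin #s ↪ V := s.equivFin.symm.toEmbedding.trans (.subtype _)
  have hf : ∀ w, w ∈ s ↔ ∃ a, f a = w := fun w =>
    ⟨fun hw => ⟨s.equivFin ⟨w, hw⟩, by simp [f]⟩,
      by rintro ⟨a, rfl⟩; exact (s.equivFin.symm a).2⟩
  have : Nonempty (Fin #s) := ⟨⟨0, by omega⟩⟩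
  refine (hN _ (le_of_max_le_left hs) ?_).trans ⟨(Embedding.comap f G).toCopy⟩
  obtain ⟨v, hv⟩ := (G.comap f).exists_minimal_degree_vertex
  have hdeg_v : (G.comap f).degree v = #{w ∈ s | G.Adj (f v) w} := by
    rw [← card_neighborFinset_eq_degree, neighborFinset_eq_filter, ← card_map f]
    congr 1
    ext w
    simp only [Finset.mem_map, comap_adj, mem_filter, hf]
    grind
  rw [hv, hdeg_v]
  exact hdeg (f v) ((hf _).2 ⟨v, rfl⟩)

end SimpleGraph

def edgeGraph {n : ℕ} (p : Edge n → Prop) : SimpleGraph (Fin n) :=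
  SimpleGraph.fromRel fun x y => ∃ h : x < y, p ⟨(x, y), h⟩

section edgeGraph

variable {n : ℕ} {p q : Edge n → Prop}

lemma edgeGraph_adj_of_lt {x y : Fin n} (h : x < y) :
    (edgeGraph p).Adj x y ↔ p ⟨(x, y), h⟩ := by
  refine ⟨?_, fun hp => ⟨h.ne, .inl ⟨h, hp⟩⟩⟩
  rintro ⟨-, ⟨_, hp⟩ | ⟨h', -⟩⟩
  exacts [hp, absurd h' h.not_gt]

lemma edgeGraph_mono (hpq : ∀ e, p e → q e) : edgeGraph p ≤ edgeGraph q := by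
  rintro x y ⟨hxy, ⟨h, hp⟩ | ⟨h, hp⟩⟩
  exacts [⟨hxy, .inl ⟨h, hpq _ hp⟩⟩, ⟨hxy, .inr ⟨h, hpq _ hp⟩⟩]

lemma card_edgeFinset_edgeGraph [DecidablePred p] [DecidableRel (edgeGraph p).Adj] :
    #(edgeGraph p).edgeFinset = #{e | p e} := by
  refine (card_nbij (fun e => s(e.1.1, e.1.2)) ?_ ?_ ?_).symm
  · intro e he
    simpa [edgeGraph_adj_of_lt e.2] using he
  · rintro ⟨⟨a, b⟩, hab⟩ - ⟨⟨c, d⟩, hcd⟩ - h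
    simp only [Sym2.eq_iff] at h
    rcases h with ⟨rfl, rfl⟩ | ⟨rfl, rfl⟩
    · rfl
    · exact absurd (hab.trans hcd) (lt_irrefl _)
  · intro z hz
    induction z using Sym2.ind with
    | h x y =>
    simp only [coe_edgeFinset, mem_edgeSet] at hz
    rcases hz.ne.lt_or_gt with h | h
    · exact ⟨⟨(x, y), h⟩, by simpa [edgeGraph_adj_of_lt h] using hz, rfl⟩
    · exact ⟨⟨(y, x), h⟩, by simpa [edgeGraph_adj_of_lt h] using hz.symm, Sym2.eq_swap⟩

end edgeGraph

def allowedGraph {n : ℕ} (t : Template 2 n) (k : Fin 2) : SimpleGraph (Fin n) :=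
  edgeGraph fun e => k ∈ t e

def freeGraph {n : ℕ} (t : Template 2 n) : SimpleGraph (Fin n) :=
  edgeGraph fun e => t e = univ

section Template

variable {n : ℕ} {t : Template 2 n}

lemma freeGraph_le_allowedGraph (k : Fin 2) : freeGraph t ≤ allowedGraph t k :=
  edgeGraph_mono fun _ he => he ▸ mem_univ k

lemma allowedGraph_zero_adj (ht : Proper t) {x y : Fin n} (hxy : x ≠ y)
    (h : ¬(allowedGraph t 1).Adj x y) : (allowedGraph t 0).Adj x y := by
  have key : ∀ e, 1 ∉ t e → 0 ∈ t e := fun e h1 => by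
    obtain ⟨k, hk⟩ := ht e
    fin_cases k
    exacts [hk, absurd hk h1]
  rcases hxy.lt_or_gt with hlt | hlt
  · rw [allowedGraph, edgeGraph_adj_of_lt hlt] at h ⊢
    exact key _ h
  · rw [allowedGraph, adj_comm, edgeGraph_adj_of_lt hlt] at h ⊢
    exact key _ h

lemma ent_eq_card_eq_univ (ht : Proper t) : Ent t = #{e | t e = univ} := by
  rw [Ent, Nat.cast_ofNat, card_filter, Nat.cast_sum]
  refine sum_congr rfl fun e _ => ?_
  have h1 : 1 ≤ #(t e) := card_pos.2 (ht e)
  have h2 : #(t e) ≤ 2 := card_le_univ (t e)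
  rcases (show #(t e) = 1 ∨ #(t e) = 2 by omega) with h | h
  · rw [h, if_neg (by rw [← card_eq_iff_eq_univ, Fintype.card_fin]; omega)]
    simp
  · rw [h, if_pos (by rwa [← card_eq_iff_eq_univ, Fintype.card_fin])]
    simp

lemma sum_card_adj_freeGraph (ht : Proper t) [DecidableRel (freeGraph t).Adj] :
    ∑ x, (#{y | (freeGraph t).Adj x y} : ℝ) = 2 * Ent t := by
  have hE : #(freeGraph t).edgeFinset = #{e | t e = univ} := by
    classical
    convert card_edgeFinset_edgeGraph (p := fun e => t e = univ)
    rfl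
  simp_rw [← neighborFinset_eq_filter, card_neighborFinset_eq_degree]
  rw [← Nat.cast_sum, sum_degrees_eq_twice_card_edges, hE, ent_eq_card_eq_univ ht]
  push_cast
  rfl

lemma exists_embedding_allowedGraph_adj (ht : Proper t) {N ℓ : ℕ}
    (hN : ∀ G : SimpleGraph (Fin N), ∃ (b : Bool) (e : Fin ℓ ↪ Fin N),
      ∀ x y, x ≠ y → (G.Adj (e x) (e y) ↔ b = true))
    {φ : Fin N → Fin n} (hφ : φ.Injective) : ∃ (b : Bool) (e : Fin ℓ ↪ Fin N),
      ∀ x y, x ≠ y → (allowedGraph t (if b then 1 else 0)).Adj (φ (e x)) (φ (e y)) := by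
  obtain ⟨b, e, he⟩ := hN ((allowedGraph t 1).comap φ)
  refine ⟨b, e, fun x y hxy => ?_⟩
  cases b
  · exact allowedGraph_zero_adj ht (hφ.ne (e.injective.ne hxy))
      (by simpa using (he x y hxy).not.2 Bool.false_ne_true)
  · simpa using (he x y hxy).2 rfl

lemma colouringGraph_adj_of_lt {c : Colouring 2 n} {x y : Fin n} (h : x < y) :
    (colouringGraph c).Adj x y ↔ c ⟨(x, y), h⟩ = 1 :=
  edgeGraph_adj_of_lt (p := (· = 1) ∘ c) h

lemma exists_realises_comap_colouringGraph_eq {m : ℕ} (ht : Proper t)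
    (ψ : Fin m ↪ Fin n) (G : SimpleGraph (Fin m)) [DecidableRel G.Adj]
    (hG : ∀ a b, a ≠ b → (allowedGraph t (if G.Adj a b then 1 else 0)).Adj (ψ a) (ψ b)) :
    ∃ c : Colouring 2 n, Realises c t ∧ (colouringGraph c).comap ψ = G := by
  classical
  let c : Colouring 2 n := fun e =>
    if (∃ a b, ψ a = e.1.1 ∧ ψ b = e.1.2 ∧ G.Adj a b) ∨ 0 ∉ t e then 1 else 0
  have hψ : ∀ a b (h : ψ a < ψ b), (if G.Adj a b then 1 else 0) ∈ t ⟨(ψ a, ψ b), h⟩ :=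
    fun a b h => (edgeGraph_adj_of_lt h).1 (hG a b (ψ.injective.ne_iff.1 h.ne))
  have hc : ∀ a b (h : ψ a < ψ b), c ⟨(ψ a, ψ b), h⟩ = 1 ↔ G.Adj a b := by
    intro a b h
    have := hψ a b h
    by_cases hab : G.Adj a b
    · exact iff_of_true (if_pos (.inl ⟨a, b, rfl, rfl, hab⟩)) hab
    · rw [if_neg hab] at this
      simp [c, hab, this, ψ.injective.eq_iff]
  refine ⟨c, fun ⟨⟨x, y⟩, hxy⟩ => ?_, ?_⟩
  · by_cases h : ∃ a b, ψ a = x ∧ ψ b = y ∧ G.Adj a b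
    · obtain ⟨a, b, rfl, rfl, hab⟩ := h
      rw [show c _ = 1 from if_pos (.inl ⟨a, b, rfl, rfl, hab⟩)]
      simpa [hab] using hψ a b hxy
    · by_cases h0 : 0 ∈ t ⟨(x, y), hxy⟩
      · rwa [show c _ = 0 from if_neg (not_or.2 ⟨h, not_not.2 h0⟩)]
      · rw [show c _ = 1 from if_pos (.inr h0)]
        obtain ⟨k, hk⟩ := ht ⟨(x, y), hxy⟩
        fin_cases k
        exacts [absurd hk h0, hk]
  · ext a b
    rw [comap_adj]
    rcases lt_trichotomy (ψ a) (ψ b) with h | h | h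
    · rw [colouringGraph_adj_of_lt h, hc]
    · simp [ψ.injective h]
    · rw [adj_comm, colouringGraph_adj_of_lt h, hc, adj_comm]

end Template

lemma InHl.exists_embedding {r m ℓ : ℕ} {v : Fin r → Bool} {G : SimpleGraph (Fin m)}
    (hG : InHl ℓ v G) : ∃ σ : Fin m ↪ Fin r × Fin ℓ,
      ∀ a b, a ≠ b → (σ a).1 = (σ b).1 → (G.Adj a b ↔ v (σ a).1 = true) := by
  obtain ⟨f, hcard, hadj⟩ := hG
  have hfib : ∀ i, Nonempty ({x // f x = i} ↪ Fin ℓ) := fun i => by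
    refine Function.Embedding.nonempty_of_card_le ?_
    rw [Fintype.card_fin, ← Nat.card_eq_fintype_card]
    exact (Nat.card_coe_set_eq {x | f x = i}).trans_le (hcard i)
  let σ : Fin m ↪ Fin r × Fin ℓ := ((Equiv.sigmaFiberEquiv f).symm.toEmbedding.trans
    (.sigmaMap (.refl _) fun i => (hfib i).some)).trans (Equiv.sigmaEquivProd _ _).toEmbedding
  exact ⟨σ, fun a b hab _ => hadj a b hab (by simpa [σ])⟩

lemma eventually_lt_two_mul_choose_two {a ε : ℝ} (ha : a ≤ 1) (hε : 0 < ε) (k : ℕ) :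
    ∀ᶠ n : ℕ in Filter.atTop,
      (a + ε / 2) * n * (n + 1) + k ^ 2 < 2 * ((a + ε) * n.choose 2) := by
  rw [Filter.eventually_atTop]
  refine ⟨max k (⌈(4 + 3 * ε + 2 * k) / ε⌉₊ + 1), fun n hn => ?_⟩
  have hk : (k : ℝ) ≤ n := by exact_mod_cast le_of_max_le_left hn
  have hεn : 4 + 3 * ε + 2 * k < ε * n := by
    rw [← div_lt_iff₀' hε]
    refine (Nat.le_ceil _).trans_lt ?_
    exact_mod_cast Nat.lt_of_succ_le (le_of_max_le_right hn)
  have hn0 : (0 : ℝ) < n := by nlinarith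
  rw [Nat.cast_choose_two]
  -- the right side exceeds the left by `ε n² / 2 - (2 a + 3 ε / 2) n - k²`
  nlinarith [mul_lt_mul_of_pos_left hεn hn0, mul_le_mul_of_nonneg_left hk k.cast_nonneg,
    mul_le_mul_of_nonneg_right ha hn0.le]

theorem eventually_exists_free_homogeneous_embedding {ε : ℝ} (hε : 0 < ε) (r ℓ : ℕ) :
    ∀ᶠ n in Filter.atTop, ∀ t : Template 2 n, Proper t →
      (1 - 1 / (r : ℝ) + ε) * (n.choose 2 : ℝ) ≤ Ent t →
      ∃ (v : Fin (r + 1) → Bool) (κ : Fin (r + 1) × Fin ℓ ↪ Fin n),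
        (∀ p q, p.1 ≠ q.1 → (freeGraph t).Adj (κ p) (κ q)) ∧
        ∀ p q, p ≠ q → p.1 = q.1 →
          (allowedGraph t (if v p.1 then 1 else 0)).Adj (κ p) (κ q) := by
  obtain ⟨N, hN⟩ := exists_embedding_forall_adj_iff ℓ
  obtain ⟨M, hM⟩ := exists_completeEquipartiteGraph_isContained_of_forall_le_card_adj
    (half_pos hε) r N
  have ha : 0 ≤ 1 - 1 / (r : ℝ) := by
    rcases r.eq_zero_or_pos with rfl | hr
    · simp
    · exact sub_nonneg.2 (div_le_one_of_le₀ (by exact_mod_cast hr) r.cast_nonneg)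
  filter_upwards [eventually_lt_two_mul_choose_two (a := 1 - 1 / (r : ℝ))
    (sub_le_self _ (by positivity)) hε M] with n hn t ht hEnt
  classical
  have hdense : (1 - 1 / (r : ℝ) + ε / 2) * n * (n + 1) + M ^ 2 <
      ∑ x, (#{y | (freeGraph t).Adj x y} : ℝ) :=
    calc _ < 2 * ((1 - 1 / (r : ℝ) + ε) * n.choose 2) := hn
      _ ≤ 2 * Ent t := by gcongr
      _ = _ := (sum_card_adj_freeGraph ht).symm
  obtain ⟨s, -, hs, hmin⟩ := exists_subset_forall_mul_card_le_card_adj (G := freeGraph t)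
    (add_nonneg ha (half_pos hε).le) M univ (by simpa using hdense)
  obtain ⟨κ₀, hκ₀⟩ := isContained_iff_exists_le_comap.1 (hM (freeGraph t) s hs.le (by
    simpa [add_halves] using hmin))
  choose v e he using fun i => exists_embedding_allowedGraph_adj ht hN
    (κ₀.injective.comp (Prod.mk_right_injective i))
  refine ⟨v, ⟨fun p => κ₀ (p.1, e p.1 p.2), ?_⟩, fun p q hpq => hκ₀ hpq, ?_⟩
  · rintro ⟨i, x⟩ ⟨j, y⟩ h
    obtain ⟨rfl, hxy⟩ := Prod.ext_iff.1 (κ₀.injective h)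
    simpa using (e i).injective hxy
  · rintro ⟨i, x⟩ ⟨j, y⟩ hne (rfl : i = j)
    exact he i x y (by rintro rfl; exact hne rfl)

theorem universal_lemma_general (P : ∀ n, Set (SimpleGraph (Fin n))) (hP : GraphHereditary P)
    (r ℓ : ℕ) (ε : ℝ) (hε : 0 < ε) :
    ∃ n₀ : ℕ, ∀ n, n₀ ≤ n → ∀ t : Template 2 n, Proper t →
      (∀ c : Colouring 2 n, Realises c t → colouringGraph c ∈ P n) →
      (1 - 1 / (r : ℝ) + ε) * (n.choose 2 : ℝ) ≤ Ent t →
      ∃ v : Fin (r + 1) → Bool,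
        ∀ (m : ℕ) (G : SimpleGraph (Fin m)), InHl ℓ v G → G ∈ P m := by
  classical
  obtain ⟨n₀, hn₀⟩ :=
    Filter.eventually_atTop.1 (eventually_exists_free_homogeneous_embedding hε r ℓ)
  refine ⟨n₀, fun n hn t ht hPt hEnt => ?_⟩
  obtain ⟨v, κ, hfree, hhom⟩ := hn₀ n hn t ht hEnt
  refine ⟨v, fun m G hG => ?_⟩
  obtain ⟨σ, hσ⟩ := hG.exists_embedding
  have hallowed : ∀ a b, a ≠ b →
      (allowedGraph t (if G.Adj a b then 1 else 0)).Adj (κ (σ a)) (κ (σ b)) := by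
    intro a b hab
    by_cases hi : (σ a).1 = (σ b).1
    · simpa only [hσ a b hab hi] using hhom _ _ (σ.injective.ne hab) hi
    · exact freeGraph_le_allowedGraph _ (hfree _ _ hi)
  obtain ⟨c, hc, hcG⟩ := exists_realises_comap_colouringGraph_eq ht (σ.trans κ) G hallowed
  exact hcG ▸ hP m n (σ.trans κ) _ (hPt c hc)

/-- Universal lemma for entropy-dense templates (Lemma 4.3). -/
theorem universal_lemma (P : ∀ n, Set (SimpleGraph (Fin n))) (hP : GraphHereditary P)
    (r ℓ : ℕ) (hr : 2 ≤ r) (hℓ : 1 ≤ ℓ) (ε : ℝ) (hε : 0 < ε) :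
    ∃ n₀ : ℕ, ∀ n, n₀ ≤ n → ∀ t : Template 2 n, Proper t →
      (∀ c : Colouring 2 n, Realises c t → colouringGraph c ∈ P n) →
      (1 - 1 / (r : ℝ) + ε) * (n.choose 2 : ℝ) ≤ Ent t →
      ∃ v : Fin (r + 1) → Bool,
        ∀ (m : ℕ) (G : SimpleGraph (Fin m)), InHl ℓ v G → G ∈ P m :=
  universal_lemma_general P hP r ℓ ε hε
end

section
/- Extremal total weight for the (3,4)-multigraph problem: Let n ≥ 3 and let w : E(K_n) → ℕ be a multigraph on [n] such that for every three distinct vertices x, y, z, w({x,y}) + w({y,z}) + w({x,z}) ≤ 4. Then the total edge weight satisfies Σ_{e∈E(K_n)} w(e) ≤ ⌊n²/2⌋. -/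
/-- The multiplicity that `w` assigns to the (unordered) pair `{x, y}`. -/
def pairW {n : ℕ} (w : Edge n → ℕ) (x y : Fin n) : ℕ :=
  if h : x < y then w ⟨(x, y), h⟩ else if h' : y < x then w ⟨(y, x), h'⟩ else 0

open Finset

namespace Multigraph

variable {V : Type*} {f : V → V → ℕ}

def TriangleBounded (f : V → V → ℕ) (s : Finset V) : Prop :=
  ∀ x ∈ s, ∀ y ∈ s, ∀ z ∈ s, x ≠ y → y ≠ z → x ≠ z → f x y + f y z + f x z ≤ 4

lemma TriangleBounded.mono {s t : Finset V} (hf : TriangleBounded f s) (hts : t ⊆ s) :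
    TriangleBounded f t :=
  fun x hx y hy z hz => hf x (hts hx) y (hts hy) z (hts hz)

variable [DecidableEq V]

lemma sum_sum_insert (hsymm : ∀ x y, f x y = f y x) (hdiag : ∀ x, f x x = 0) {a : V}
    {t : Finset V} (ha : a ∉ t) :
    ∑ x ∈ insert a t, ∑ y ∈ insert a t, f x y =
      ∑ x ∈ t, ∑ y ∈ t, f x y + 2 * ∑ y ∈ t, f a y := by
  simp only [sum_insert ha, hdiag, zero_add, sum_add_distrib, hsymm _ a]
  ring

lemma sum_sum_le_of_card_eq_three (hsymm : ∀ x y, f x y = f y x) (hdiag : ∀ x, f x x = 0)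
    {s : Finset V} (hs : #s = 3) (hf : TriangleBounded f s) :
    ∑ x ∈ s, ∑ y ∈ s, f x y ≤ 8 := by
  obtain ⟨a, b, c, hab, hac, hbc, rfl⟩ := card_eq_three.mp hs
  have habc := hf a (by simp) b (by simp) c (by simp) hab hbc hac
  rw [sum_sum_insert hsymm hdiag (by simp [hab, hac]),
    sum_sum_insert hsymm hdiag (by simp [hbc])]
  simp only [sum_pair hbc, sum_singleton, hdiag]
  omega

lemma sum_sum_le_of_card_eq_four (hsymm : ∀ x y, f x y = f y x) (hdiag : ∀ x, f x x = 0)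
    {s : Finset V} (hs : #s = 4) (hf : TriangleBounded f s) :
    ∑ x ∈ s, ∑ y ∈ s, f x y ≤ 16 := by
  obtain ⟨a, t, hat, rfl, ht⟩ := card_eq_succ.mp hs
  obtain ⟨b, c, d, hbc, hbd, hcd, rfl⟩ := card_eq_three.mp ht
  simp only [mem_insert, mem_singleton, not_or] at hat
  obtain ⟨hab, hac, had⟩ := hat
  have habc := hf a (by simp) b (by simp) c (by simp) hab hbc hac
  have habd := hf a (by simp) b (by simp) d (by simp) hab hbd had
  have hacd := hf a (by simp) c (by simp) d (by simp) hac hcd had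
  have hbcd := hf b (by simp) c (by simp) d (by simp) hbc hcd hbd
  rw [sum_sum_insert hsymm hdiag (by simp [hab, hac, had]),
    sum_sum_insert hsymm hdiag (by simp [hbc, hbd]),
    sum_sum_insert hsymm hdiag (by simp [hcd])]
  simp only [sum_insert (show b ∉ ({c, d} : Finset V) by simp [hbc, hbd]), sum_pair hcd,
    sum_singleton, hdiag]
  omega

lemma sum_sum_le_of_le_one (hdiag : ∀ x, f x x = 0) {s : Finset V}
    (hf : ∀ x ∈ s, ∀ y ∈ s, x ≠ y → f x y ≤ 1) :
    ∑ x ∈ s, ∑ y ∈ s, f x y ≤ #s * (#s - 1) := by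
  have hrow : ∀ x ∈ s, ∑ y ∈ s, f x y ≤ #s - 1 := fun x hx => calc
    ∑ y ∈ s, f x y = ∑ y ∈ s.erase x, f x y := (sum_erase s (hdiag x)).symm
    _ ≤ ∑ y ∈ s.erase x, 1 :=
      sum_le_sum fun y hy => hf x hx y (mem_of_mem_erase hy) (ne_of_mem_erase hy).symm
    _ = #s - 1 := by rw [sum_const, card_erase_of_mem hx, smul_eq_mul, mul_one]
  simpa using sum_le_sum hrow

lemma sum_sum_insert_insert_le (hsymm : ∀ x y, f x y = f y x) (hdiag : ∀ x, f x x = 0)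
    {a b : V} {t : Finset V} (hab : a ≠ b) (ha : a ∉ t) (hb : b ∉ t) (ht : t.Nonempty)
    (hf : TriangleBounded f (insert a (insert b t))) (hfab : 2 ≤ f a b) :
    ∑ x ∈ insert a (insert b t), ∑ y ∈ insert a (insert b t), f x y ≤
      ∑ x ∈ t, ∑ y ∈ t, f x y + 4 * (#t + 1) := by
  have hz : ∀ z ∈ t, f a z + f b z + f a b ≤ 4 := fun z hz => by
    have := hf a (by simp) b (by simp) z (by simp [hz]) hab (by rintro rfl; exact hb hz)
      (by rintro rfl; exact ha hz)
    omega
  -- one vertex `z₀` pays for `f a b`, every other vertex contributes at most `2`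
  obtain ⟨z₀, hz₀⟩ := ht
  have hrest : ∑ z ∈ t.erase z₀, (f a z + f b z) ≤ 2 * (#t - 1) := calc
    ∑ z ∈ t.erase z₀, (f a z + f b z) ≤ ∑ z ∈ t.erase z₀, 2 :=
      sum_le_sum fun z hz' => by have := hz z (mem_of_mem_erase hz'); omega
    _ = 2 * (#t - 1) := by rw [sum_const, card_erase_of_mem hz₀, smul_eq_mul, mul_comm]
  have hsplit := (add_sum_erase t (fun z => f a z + f b z) hz₀).trans sum_add_distrib
  have hcard := card_pos.mpr ⟨z₀, hz₀⟩
  have := hz z₀ hz₀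
  rw [sum_sum_insert hsymm hdiag (by simp [hab, ha]), sum_sum_insert hsymm hdiag hb,
    sum_insert hb]
  omega

theorem sum_sum_le_of_triangleBounded (hsymm : ∀ x y, f x y = f y x) (hdiag : ∀ x, f x x = 0)
    {s : Finset V} (hs : 3 ≤ #s) (hf : TriangleBounded f s) :
    ∑ x ∈ s, ∑ y ∈ s, f x y ≤ 2 * (#s ^ 2 / 2) := by
  induction hk : #s using Nat.strong_induction_on generalizing s with
  | _ k ih =>
  obtain rfl | rfl | hk5 : k = 3 ∨ k = 4 ∨ 5 ≤ k := by omega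
  · exact sum_sum_le_of_card_eq_three hsymm hdiag hk hf
  · exact sum_sum_le_of_card_eq_four hsymm hdiag hk hf
  by_cases hheavy : ∃ a ∈ s, ∃ b ∈ s, a ≠ b ∧ 2 ≤ f a b
  · obtain ⟨a, ha, b, hb, hab, hfab⟩ := hheavy
    obtain ⟨t, rfl, hat, hbt⟩ : ∃ t, s = insert a (insert b t) ∧ a ∉ t ∧ b ∉ t :=
      ⟨(s.erase a).erase b, by rw [insert_erase (mem_erase.mpr ⟨hab.symm, hb⟩), insert_erase ha],
        fun h => notMem_erase a s (mem_of_mem_erase h), notMem_erase b _⟩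
    have hcard : k = #t + 2 := by
      rw [← hk, card_insert_of_notMem (by simp [hab, hat]), card_insert_of_notMem hbt]
    have hrec := ih #t (by omega) (by omega)
      (hf.mono ((subset_insert _ _).trans (subset_insert _ _))) rfl
    have hstep := sum_sum_insert_insert_le hsymm hdiag hab hat hbt (card_pos.mp (by omega)) hf hfab
    have hsq : (#t + 2) ^ 2 = #t ^ 2 + 4 * (#t + 1) := by ring
    rw [hcard, hsq]
    omega
  · push Not at hheavy
    have hlight := sum_sum_le_of_le_one hdiag fun x hx y hy hxy => by
      have := hheavy x hx y hy hxy; omega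
    have hsq : k * (k - 1) + k = k ^ 2 := by
      obtain ⟨j, rfl⟩ : ∃ j, k = j + 1 := ⟨k - 1, by omega⟩
      simp only [Nat.add_sub_cancel]; ring
    rw [hk] at hlight
    omega

end Multigraph

def pairWLt {n : ℕ} (w : Edge n → ℕ) (x y : Fin n) : ℕ :=
  if h : x < y then w ⟨(x, y), h⟩ else 0

lemma pairW_eq_pairWLt_add {n : ℕ} (w : Edge n → ℕ) (x y : Fin n) :
    pairW w x y = pairWLt w x y + pairWLt w y x := by
  unfold pairW pairWLt
  rcases lt_trichotomy x y with h | rfl | h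
  · simp [h, h.asymm]
  · simp
  · simp [h, h.asymm]

lemma pairW_comm {n : ℕ} (w : Edge n → ℕ) (x y : Fin n) : pairW w x y = pairW w y x := by
  rw [pairW_eq_pairWLt_add, pairW_eq_pairWLt_add, add_comm]

lemma pairW_self {n : ℕ} (w : Edge n → ℕ) (x : Fin n) : pairW w x x = 0 := by
  simp [pairW]

lemma sum_sum_pairWLt {n : ℕ} (w : Edge n → ℕ) : ∑ x, ∑ y, pairWLt w x y = ∑ e : Edge n, w e := by
  rw [← Fintype.sum_prod_type' (f := pairWLt w)]
  simp only [pairWLt, sum_dite, sum_const_zero, add_zero]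
  exact Fintype.sum_equiv (Equiv.subtypeEquivRight (by simp)) _ _ fun _ => rfl

lemma sum_sum_pairW {n : ℕ} (w : Edge n → ℕ) : ∑ x, ∑ y, pairW w x y = 2 * ∑ e : Edge n, w e := by
  simp only [pairW_eq_pairWLt_add, sum_add_distrib]
  rw [sum_comm (f := fun x y => pairWLt w y x), sum_sum_pairWLt, two_mul]

/-- Extremal total weight for the (3,4)-multigraph problem (Proposition 4.8):
if every triple of vertices supports at most 4 edges counting multiplicity, then the
total edge weight is at most `⌊n²/2⌋`. -/
theorem multigraph_total_weight (n : ℕ) (hn : 3 ≤ n) (w : Edge n → ℕ)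
    (hw : ∀ x y z : Fin n, x ≠ y → y ≠ z → x ≠ z →
      pairW w x y + pairW w y z + pairW w x z ≤ 4) :
    ∑ e : Edge n, w e ≤ n ^ 2 / 2 := by
  have h := Multigraph.sum_sum_le_of_triangleBounded (pairW_comm w) (pairW_self w)
    (s := univ) (by simpa using hn) fun x _ y _ z _ => hw x y z
  rw [sum_sum_pairW, card_univ, Fintype.card_fin] at h
  omega
end

section
/- Extremal entropy for the (3,4)-multigraph problem: Let P = (P_n) where P_n is the set of multigraphs w : E(K_n) → {0,1,2,3,4} in which every triple of vertices supports at most 4 edges counting multiplicity. Then for all n ≥ 3, ex(n,P) = log₅2 · C(n,2) + log₅(3/2) · ⌊n/2⌋. -/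
open Filter

/-- The multiplicity (as a natural number) that the multigraph `w : E(K_n) → {0,…,4}`
assigns to the (unordered) pair `{x, y}`. -/
def pairV {n : ℕ} (w : Colouring 5 n) (x y : Fin n) : ℕ :=
  if h : x < y then (w ⟨(x, y), h⟩).val else if h' : y < x then (w ⟨(y, x), h'⟩).val else 0

/-- Every triple of vertices supports at most 4 edges counting multiplicity. -/
def Bounded34 {n : ℕ} (w : Colouring 5 n) : Prop :=
  ∀ x y z : Fin n, x ≠ y → y ≠ z → x ≠ z →
    pairV w x y + pairV w y z + pairV w x z ≤ 4

/-!
For the upper bound, replace the colour set of each edge by its maximum `w e`; it then suffices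
to show `∏ₑ (w e + 1) ≤ 2 ^ C(n,2) · (3/2) ^ ⌊n/2⌋` whenever every triangle has weight at most `4`.
Remove a pair `u, v`, chosen heavy (weight `≥ 2`) if there is one and arbitrary otherwise: for every
other vertex `b` the triangle `u v b` then forces `(w(ub) + 1)(w(vb) + 1) ≤ 4`, while one whole
triangle contributes at most `12`, so the pair costs at most `3 · 4 ^ (n - 2)`, which is exactly the
ratio of the bounds for `n` and `n - 2`. The induction starts at `n = 3` (one triangle) and `n = 4`
(every edge of `K₄` lies in two triangles, so the square of the product is at most `12 ^ 4`).

For the lower bound, allow `{0, 1, 2}` on the perfect matching `{2i, 2i + 1}` and `{0, 1}`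
elsewhere: a triangle contains at most one matching edge.
-/

open Finset

lemma succ_mul_succ_le_four {x y : ℕ} (h : x + y ≤ 2) : (x + 1) * (y + 1) ≤ 4 := by
  have hx : x ≤ 2 := by omega
  interval_cases x <;> omega

lemma succ_mul_succ_mul_succ_le_twelve {x y z : ℕ} (h : x + y + z ≤ 4) :
    (x + 1) * (y + 1) * (z + 1) ≤ 12 := by
  have hx : x ≤ 4 := by omega
  have hy : y ≤ 4 := by omega
  interval_cases x <;> interval_cases y <;> omega

lemma prod_succ_le_of_K4 {ab ac ad bc bd cd : ℕ} (habc : ab + bc + ac ≤ 4)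
    (habd : ab + bd + ad ≤ 4) (hacd : ac + cd + ad ≤ 4) (hbcd : bc + cd + bd ≤ 4) :
    (ab + 1) * (ac + 1) * (ad + 1) * (bc + 1) * (bd + 1) * (cd + 1) ≤ 144 := by
  refine Nat.mul_self_le_mul_self_iff.1 ?_
  calc _ = ((ab + 1) * (bc + 1) * (ac + 1)) * ((ab + 1) * (bd + 1) * (ad + 1)) *
        (((ac + 1) * (cd + 1) * (ad + 1)) * ((bc + 1) * (cd + 1) * (bd + 1))) := by ring
    _ ≤ 12 * 12 * (12 * 12) := by
      gcongr <;> exact succ_mul_succ_mul_succ_le_twelve ‹_›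

lemma succ_mul_prod_le {ι : Type*} {r : Finset ι} (hr : r.Nonempty) (a : ℕ) (x y : ι → ℕ)
    (htri : ∀ b ∈ r, a + x b + y b ≤ 4) (hpair : ∀ b ∈ r, (x b + 1) * (y b + 1) ≤ 4) :
    (a + 1) * ∏ b ∈ r, (x b + 1) * (y b + 1) ≤ 3 * 4 ^ #r := by
  classical
  obtain ⟨b, hb⟩ := hr
  have hrest := prod_le_pow_card (r.erase b) (fun b => (x b + 1) * (y b + 1)) 4
    fun c hc => hpair c (mem_of_mem_erase hc)
  rw [card_erase_of_mem hb] at hrest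
  calc (a + 1) * ∏ b ∈ r, (x b + 1) * (y b + 1)
      = (a + 1) * (x b + 1) * (y b + 1) * ∏ c ∈ r.erase b, (x c + 1) * (y c + 1) := by
        rw [← mul_prod_erase r _ hb]; ring
    _ ≤ 12 * 4 ^ (#r - 1) := by gcongr; exact succ_mul_succ_mul_succ_le_twelve (htri b hb)
    _ = 3 * 4 ^ #r := by
        obtain ⟨k, hk⟩ := Nat.exists_eq_add_of_lt (card_pos.2 ⟨b, hb⟩)
        rw [hk, zero_add, Nat.add_sub_cancel, pow_succ]; ring

lemma choose_two_add_two (k : ℕ) : (k + 2).choose 2 = k.choose 2 + 2 * k + 1 := by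
  rw [Nat.choose_succ_succ (k + 1) 1, Nat.choose_succ_succ k 1, Nat.choose_one_right,
    Nat.choose_one_right]
  ring

section Bounded34On

variable {V : Type*}

def Bounded34On (W : Sym2 V → ℕ) (s : Finset V) : Prop :=
  ∀ x ∈ s, ∀ y ∈ s, ∀ z ∈ s, x ≠ y → y ≠ z → x ≠ z → W s(x, y) + W s(y, z) + W s(x, z) ≤ 4

variable {W : Sym2 V → ℕ} {s : Finset V}

lemma Bounded34On.mono {r : Finset V} (hW : Bounded34On W s) (hrs : r ⊆ s) : Bounded34On W r :=
  fun x hx y hy z hz => hW x (hrs hx) y (hrs hy) z (hrs hz)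

variable [DecidableEq V]

def offDiagSym2 (s : Finset V) : Finset (Sym2 V) := {z ∈ s.sym2 | ¬ z.IsDiag}

lemma offDiagSym2_eq_empty (hs : #s ≤ 1) : offDiagSym2 s = ∅ := by
  refine filter_false_of_mem fun z hz => ?_
  induction z using Sym2.ind with
  | _ a b =>
    rw [mk_mem_sym2_iff] at hz
    exact not_not.2 (Sym2.mk_isDiag_iff.2 (card_le_one.1 hs a hz.1 b hz.2))

lemma prod_offDiagSym2_insert {M : Type*} [CommMonoid M] (f : Sym2 V → M) {a : V} (ha : a ∉ s) :
    ∏ z ∈ offDiagSym2 (insert a s), f z = (∏ b ∈ s, f s(a, b)) * ∏ z ∈ offDiagSym2 s, f z := by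
  have hlink : {z ∈ (insert a s).image (fun b => s(a, b)) | ¬ z.IsDiag}
      = s.image (fun b => s(a, b)) := by
    ext z
    simp only [mem_filter, mem_image, mem_insert]
    constructor
    · rintro ⟨⟨b, rfl | hb, rfl⟩, hz⟩
      · exact absurd (Sym2.mk_isDiag_iff.2 rfl) hz
      · exact ⟨b, hb, rfl⟩
    · rintro ⟨b, hb, rfl⟩
      exact ⟨⟨b, Or.inr hb, rfl⟩, fun h => ha (Sym2.mk_isDiag_iff.1 h ▸ hb)⟩
  rw [offDiagSym2, sym2_insert, filter_union, hlink, prod_union, prod_image]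
  · rfl
  · exact fun b _ c _ h => Sym2.congr_right.1 h
  · refine disjoint_left.2 fun z hz hz' => ?_
    obtain ⟨b, -, rfl⟩ := mem_image.1 hz
    exact ha (mk_mem_sym2_iff.1 (mem_filter.1 hz').1).1

@[simp]
lemma offDiagSym2_singleton (a : V) : offDiagSym2 {a} = ∅ :=
  offDiagSym2_eq_empty (card_singleton a).le

lemma Bounded34On.prod_le_of_card_eq_three (hW : Bounded34On W s) (hs : #s = 3) :
    ∏ z ∈ offDiagSym2 s, (W z + 1) ≤ 12 := by
  obtain ⟨a, b, c, hab, hac, hbc, rfl⟩ := card_eq_three.1 hs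
  have habc := hW a (by simp) b (by simp) c (by simp) hab hbc hac
  simp only [prod_offDiagSym2_insert, mem_insert, mem_singleton, hab, hac, hbc, not_false_eq_true,
    prod_insert, prod_singleton, offDiagSym2_singleton, prod_empty, mul_one, or_self]
  calc _ = (W s(a, b) + 1) * (W s(b, c) + 1) * (W s(a, c) + 1) := by ring
    _ ≤ 12 := succ_mul_succ_mul_succ_le_twelve habc

lemma Bounded34On.prod_le_of_card_eq_four (hW : Bounded34On W s) (hs : #s = 4) :
    ∏ z ∈ offDiagSym2 s, (W z + 1) ≤ 144 := by
  obtain ⟨a, t, hat, rfl, ht⟩ := card_eq_succ.1 hs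
  obtain ⟨b, c, d, hbc, hbd, hcd, rfl⟩ := card_eq_three.1 ht
  simp only [mem_insert, mem_singleton, not_or] at hat
  obtain ⟨hab, hac, had⟩ := hat
  simp only [prod_offDiagSym2_insert, mem_insert, mem_singleton, hab, hac, had, hbc, hbd, hcd,
    not_false_eq_true, prod_insert, prod_singleton, offDiagSym2_singleton, prod_empty, mul_one,
    or_self]
  calc _ = (W s(a, b) + 1) * (W s(a, c) + 1) * (W s(a, d) + 1) * (W s(b, c) + 1) *
        (W s(b, d) + 1) * (W s(c, d) + 1) := by ring
    _ ≤ 144 := prod_succ_le_of_K4 (hW a (by simp) b (by simp) c (by simp) hab hbc hac)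
        (hW a (by simp) b (by simp) d (by simp) hab hbd had)
        (hW a (by simp) c (by simp) d (by simp) hac hcd had)
        (hW b (by simp) c (by simp) d (by simp) hbc hcd hbd)

lemma Bounded34On.exists_pair_succ_mul_succ_le_four (hW : Bounded34On W s) (hs : 1 < #s) :
    ∃ u ∈ s, ∃ v ∈ s, u ≠ v ∧
      ∀ b ∈ s, b ≠ u → b ≠ v → (W s(u, b) + 1) * (W s(v, b) + 1) ≤ 4 := by
  by_cases hheavy : ∃ u ∈ s, ∃ v ∈ s, u ≠ v ∧ 2 ≤ W s(u, v)
  · obtain ⟨u, hu, v, hv, huv, h2⟩ := hheavy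
    refine ⟨u, hu, v, hv, huv, fun b hb hbu hbv => succ_mul_succ_le_four ?_⟩
    have := hW u hu v hv b hb huv (Ne.symm hbv) (Ne.symm hbu)
    omega
  · push Not at hheavy
    obtain ⟨u, hu, v, hv, huv⟩ := one_lt_card.1 hs
    refine ⟨u, hu, v, hv, huv, fun b hb hbu hbv => succ_mul_succ_le_four ?_⟩
    have := hheavy u hu b hb (Ne.symm hbu)
    have := hheavy v hv b hb (Ne.symm hbv)
    omega

lemma Bounded34On.exists_prod_le_mul_prod (hW : Bounded34On W s) (hs : 3 ≤ #s) :
    ∃ r ⊆ s, #r + 2 = #s ∧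
      ∏ z ∈ offDiagSym2 s, (W z + 1) ≤ 3 * 4 ^ #r * ∏ z ∈ offDiagSym2 r, (W z + 1) := by
  obtain ⟨u, hu, v, hv, huv, hpair⟩ := hW.exists_pair_succ_mul_succ_le_four (by omega)
  set r := (s.erase u).erase v
  have hvr : v ∉ r := notMem_erase v _
  have hur : u ∉ insert v r := by simp [r, huv]
  have hs_eq : insert u (insert v r) = s := by
    rw [insert_erase (mem_erase.2 ⟨huv.symm, hv⟩), insert_erase hu]
  have hcard : #r + 2 = #s := by
    rw [← hs_eq, card_insert_of_notMem hur, card_insert_of_notMem hvr]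
  have hrs : r ⊆ s := (erase_subset _ _).trans (erase_subset _ _)
  have hmem : ∀ b ∈ r, b ∈ s ∧ b ≠ u ∧ b ≠ v := fun b hb => by
    simp only [r, mem_erase] at hb; exact ⟨hb.2.2, hb.2.1, hb.1⟩
  refine ⟨r, hrs, hcard, ?_⟩
  have hlink : (W s(u, v) + 1) * ∏ b ∈ r, (W s(u, b) + 1) * (W s(v, b) + 1) ≤ 3 * 4 ^ #r := by
    refine succ_mul_prod_le (card_pos.1 (by omega)) _ _ _ (fun b hb => ?_) fun b hb =>
      hpair b (hmem b hb).1 (hmem b hb).2.1 (hmem b hb).2.2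
    have := hW u hu v hv b (hmem b hb).1 huv (hmem b hb).2.2.symm (hmem b hb).2.1.symm
    omega
  calc ∏ z ∈ offDiagSym2 s, (W z + 1)
      = (W s(u, v) + 1) * (∏ b ∈ r, (W s(u, b) + 1) * (W s(v, b) + 1)) *
          ∏ z ∈ offDiagSym2 r, (W z + 1) := by
        rw [← hs_eq, prod_offDiagSym2_insert _ hur, prod_insert hvr,
          prod_offDiagSym2_insert _ hvr, prod_mul_distrib]
        ring
    _ ≤ 3 * 4 ^ #r * ∏ z ∈ offDiagSym2 r, (W z + 1) := by gcongr

theorem Bounded34On.prod_mul_le (hW : Bounded34On W s) (hs : #s ≠ 2) :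
    (∏ z ∈ offDiagSym2 s, (W z + 1)) * 2 ^ (#s / 2) ≤ 2 ^ (#s).choose 2 * 3 ^ (#s / 2) := by
  induction hk : #s using Nat.strong_induction_on generalizing s with
  | _ k ih =>
  obtain _ | _ | _ | _ | _ | k := k
  · simp [offDiagSym2_eq_empty (by omega : #s ≤ 1)]
  · simp [offDiagSym2_eq_empty (by omega : #s ≤ 1)]
  · exact absurd hk hs
  · have := hW.prod_le_of_card_eq_three hk
    norm_num [Nat.choose]; omega
  · have := hW.prod_le_of_card_eq_four hk
    norm_num [Nat.choose]; omega
  obtain ⟨r, hrs, hcard, hprod⟩ := hW.exists_prod_le_mul_prod (by omega)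
  have hr : #r = k + 3 := by omega
  have ih := ih #r (by omega) (hW.mono hrs) (by omega) rfl
  rw [hr] at hprod ih
  calc (∏ z ∈ offDiagSym2 s, (W z + 1)) * 2 ^ ((k + 5) / 2)
      ≤ 3 * 4 ^ (k + 3) * (∏ z ∈ offDiagSym2 r, (W z + 1)) * 2 ^ ((k + 3) / 2 + 1) := by
        rw [show (k + 5) / 2 = (k + 3) / 2 + 1 by omega]; gcongr
    _ = 2 ^ (2 * (k + 3) + 1) * 3 * ((∏ z ∈ offDiagSym2 r, (W z + 1)) * 2 ^ ((k + 3) / 2)) := by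
        rw [show (4 : ℕ) = 2 ^ 2 by rfl, ← pow_mul]; ring
    _ ≤ 2 ^ (2 * (k + 3) + 1) * 3 * (2 ^ (k + 3).choose 2 * 3 ^ ((k + 3) / 2)) := by gcongr
    _ = 2 ^ (k + 5).choose 2 * 3 ^ ((k + 5) / 2) := by
        rw [choose_two_add_two (k + 3), show (k + 5) / 2 = (k + 3) / 2 + 1 by omega]; ring

end Bounded34On

section Templates

variable {k n : ℕ}

def downTemplate (m : Colouring k n) : Template k n := fun e => Iic (m e)

lemma proper_downTemplate (m : Colouring k n) : Proper (downTemplate m) :=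
  fun _ => nonempty_Iic

lemma realises_downTemplate_iff {c m : Colouring k n} :
    Realises c (downTemplate m) ↔ ∀ e, c e ≤ m e := by
  simp [Realises, downTemplate]

lemma Ent_downTemplate (m : Colouring k n) :
    Ent (downTemplate m) = ∑ e, Real.logb k ((m e : ℕ) + 1) := by
  simp [Ent, downTemplate, Fin.card_Iic]

def maxColouring (t : Template k n) (ht : Proper t) : Colouring k n := fun e => (t e).max' (ht e)

lemma realises_maxColouring (t : Template k n) (ht : Proper t) :
    Realises (maxColouring t ht) t :=
  fun _ => max'_mem _ _

lemma Ent_le_Ent_downTemplate_maxColouring (hk : 1 < k) (t : Template k n) (ht : Proper t) :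
    Ent t ≤ Ent (downTemplate (maxColouring t ht)) := by
  refine sum_le_sum fun e _ => Real.logb_le_logb_of_le (by exact_mod_cast hk)
    (by exact_mod_cast (ht e).card_pos) ?_
  exact_mod_cast card_le_card fun c hc => mem_Iic.2 ((t e).le_max' c hc)

end Templates

section Multigraphs

variable {n : ℕ}

lemma pairV_comm (w : Colouring 5 n) (x y : Fin n) : pairV w x y = pairV w y x := by
  unfold pairV
  rcases lt_trichotomy x y with h | rfl | h
  · simp [h, h.not_gt]
  · rfl
  · simp [h, h.not_gt]

lemma pairV_mono {c w : Colouring 5 n} (h : ∀ e, c e ≤ w e) (x y : Fin n) :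
    pairV c x y ≤ pairV w x y := by
  unfold pairV
  split_ifs
  exacts [h _, h _, le_rfl]

lemma Bounded34.mono {c w : Colouring 5 n} (hw : Bounded34 w) (h : ∀ e, c e ≤ w e) :
    Bounded34 c := fun x y z hxy hyz hxz =>
  (add_le_add (add_le_add (pairV_mono h x y) (pairV_mono h y z)) (pairV_mono h x z)).trans
    (hw x y z hxy hyz hxz)

def pairWeight (w : Colouring 5 n) : Sym2 (Fin n) → ℕ := Sym2.lift ⟨pairV w, pairV_comm w⟩

lemma Bounded34.bounded34On_pairWeight {w : Colouring 5 n} (hw : Bounded34 w) :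
    Bounded34On (pairWeight w) univ :=
  fun x _ y _ z _ => hw x y z

lemma prod_edge_eq_prod_offDiagSym2 {M : Type*} [CommMonoid M] (g : Sym2 (Fin n) → M) :
    ∏ e : Edge n, g s(e.1.1, e.1.2) = ∏ z ∈ offDiagSym2 univ, g z := by
  refine prod_nbij (fun e => s(e.1.1, e.1.2)) (fun e _ => ?_) (fun e _ e' _ h => ?_)
    (fun z hz => ?_) fun _ _ => rfl
  · simpa [offDiagSym2] using e.2.ne
  · rcases Sym2.eq_iff.1 h with ⟨h1, h2⟩ | ⟨h1, h2⟩
    · exact Subtype.ext (Prod.ext h1 h2)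
    · exact absurd (e.2.trans (h2 ▸ h1 ▸ e'.2)) (lt_irrefl _)
  · induction z using Sym2.ind with
    | _ a b =>
      have hab : a ≠ b := by simpa [offDiagSym2] using hz
      rcases hab.lt_or_gt with h | h
      · exact ⟨⟨(a, b), h⟩, by simp, rfl⟩
      · exact ⟨⟨(b, a), h⟩, by simp, Sym2.eq_swap⟩

lemma Bounded34.prod_mul_le {w : Colouring 5 n} (hw : Bounded34 w) (hn : n ≠ 2) :
    (∏ e, ((w e : ℕ) + 1)) * 2 ^ (n / 2) ≤ 2 ^ n.choose 2 * 3 ^ (n / 2) := by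
  have h := hw.bounded34On_pairWeight.prod_mul_le (by simpa using hn)
  rw [← prod_edge_eq_prod_offDiagSym2, card_univ, Fintype.card_fin] at h
  have hedge : ∀ e : Edge n, pairWeight w s(e.1.1, e.1.2) = w e := fun e => dif_pos e.2
  simpa only [hedge] using h

lemma logb_extremalBound (n : ℕ) :
    Real.logb 5 2 * (n.choose 2 : ℝ) + Real.logb 5 (3 / 2) * ((n / 2 : ℕ) : ℝ) =
      Real.logb 5 (2 ^ n.choose 2 * (3 / 2) ^ (n / 2)) := by
  rw [Real.logb_mul (by positivity) (by positivity), Real.logb_pow, Real.logb_pow]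
  ring

lemma Bounded34.Ent_downTemplate_le {w : Colouring 5 n} (hw : Bounded34 w) (hn : n ≠ 2) :
    Ent (downTemplate w) ≤
      Real.logb 5 2 * (n.choose 2 : ℝ) + Real.logb 5 (3 / 2) * ((n / 2 : ℕ) : ℝ) := by
  have h : ((∏ e, ((w e : ℕ) + 1) : ℕ) : ℝ) * 2 ^ (n / 2) ≤ 2 ^ n.choose 2 * 3 ^ (n / 2) := by
    exact_mod_cast hw.prod_mul_le hn
  rw [Ent_downTemplate, Nat.cast_ofNat, ← Real.logb_prod _ _ fun e _ => by positivity,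
    logb_extremalBound]
  refine Real.logb_le_logb_of_le (by norm_num) (by positivity) ?_
  rw [div_pow, mul_div_assoc', le_div_iff₀ (by positivity)]
  exact_mod_cast h

def matchingColouring (n : ℕ) : Colouring 5 n := fun e =>
  if e.1.1.val / 2 = e.1.2.val / 2 then 2 else 1

lemma pairV_matchingColouring {x y : Fin n} (hxy : x ≠ y) :
    pairV (matchingColouring n) x y = if x.val / 2 = y.val / 2 then 2 else 1 := by
  rcases hxy.lt_or_gt with h | h
  · simp only [pairV, h, dite_true, matchingColouring]
    split_ifs <;> rfl
  · simp only [pairV, h, h.not_gt, dite_true, dite_false, matchingColouring, eq_comm]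
    split_ifs <;> rfl

lemma bounded34_matchingColouring (n : ℕ) : Bounded34 (matchingColouring n) := by
  intro x y z hxy hyz hxz
  rw [pairV_matchingColouring hxy, pairV_matchingColouring hyz, pairV_matchingColouring hxz]
  have := Fin.val_ne_of_ne hxy
  have := Fin.val_ne_of_ne hyz
  have := Fin.val_ne_of_ne hxz
  split_ifs <;> omega

lemma card_edge : Fintype.card (Edge n) = n.choose 2 := by
  rw [Fintype.card_subtype, Fintype.card_product_filter_lt, Fintype.card_fin]

lemma card_edge_sameBlock : #{e : Edge n | e.1.1.val / 2 = e.1.2.val / 2} = n / 2 := by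
  rw [← card_range (n / 2)]
  refine card_bij (fun e _ => e.1.1.val / 2) (fun e he => ?_) (fun e he e' he' h => ?_)
    fun b hb => ?_
  · have := e.2; have := e.1.2.isLt
    simp only [mem_filter, mem_univ, true_and] at he
    simp only [mem_range] at this ⊢
    omega
  · have := e.2; have := e'.2
    simp only [mem_filter, mem_univ, true_and] at he he'
    simp only [Fin.lt_def] at *
    exact Subtype.ext (Prod.ext (Fin.ext (by omega)) (Fin.ext (by omega)))
  · simp only [mem_range] at hb
    exact ⟨⟨(⟨2 * b, by omega⟩, ⟨2 * b + 1, by omega⟩), by simp [Fin.lt_def]⟩,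
      by simp; omega, by simp⟩

lemma Ent_downTemplate_matchingColouring (n : ℕ) :
    Ent (downTemplate (matchingColouring n)) =
      Real.logb 5 2 * (n.choose 2 : ℝ) + Real.logb 5 (3 / 2) * ((n / 2 : ℕ) : ℝ) := by
  have hlog : ∀ e : Edge n, Real.logb 5 (((matchingColouring n e : ℕ) : ℝ) + 1) =
      Real.logb 5 2 + if e.1.1.val / 2 = e.1.2.val / 2 then Real.logb 5 (3 / 2) else 0 := by
    intro e
    unfold matchingColouring
    split_ifs
    · rw [← Real.logb_mul (by norm_num) (by norm_num)]; norm_num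
    · norm_num
  rw [Ent_downTemplate, Nat.cast_ofNat]
  simp only [hlog, sum_add_distrib, ← sum_filter, sum_const, card_univ, card_edge,
    card_edge_sameBlock, nsmul_eq_mul]
  ring

end Multigraphs

/-- Extremal entropy for the (3,4)-multigraph problem (Theorem 4.11). -/
theorem multigraph_extremal_entropy (n : ℕ) (hn : 3 ≤ n) :
    exEnt {w : Colouring 5 n | Bounded34 w} =
      Real.logb 5 2 * (n.choose 2 : ℝ) + Real.logb 5 (3 / 2) * ((n / 2 : ℕ) : ℝ) := by
  refine IsGreatest.csSup_eq ⟨⟨downTemplate (matchingColouring n), proper_downTemplate _,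
    fun c hc => (bounded34_matchingColouring n).mono (realises_downTemplate_iff.1 hc),
    Ent_downTemplate_matchingColouring n⟩, ?_⟩
  rintro _ ⟨t, ht, hA, rfl⟩
  calc Ent t ≤ Ent (downTemplate (maxColouring t ht)) :=
        Ent_le_Ent_downTemplate_maxColouring (by norm_num) t ht
    _ ≤ _ := (hA _ (realises_maxColouring t ht)).Ent_downTemplate_le (by omega)
end

section
/- Stability for rainbow-triangle-free 3-colourings: For every ε > 0 there exist δ > 0 and n₀ ∈ ℕ such that the following holds. If n ≥ n₀ and t is a 3-colouring template for K_n satisfying (i) Ent(t) ≥ (log₃2 − δ)·C(n,2) and (ii) the number of triples {x,y,z} ⊆ [n] for which some choice of colours from the palettes t({x,y}), t({y,z}), t({x,z}) yields a rainbow triangle is at most δ·C(n,3), then there exist two distinct colours c₁, c₂ ∈ {1,2,3} such that t(e) = {c₁,c₂} for all but at most ε·C(n,2) edges e of K_n. -/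
open Filter

/-- The number of triples `x < y < z` for which some choice of colours from the palettes
of the template `t` on the three edges of the triangle yields a rainbow triangle. -/
noncomputable def rainbowTriples {n : ℕ} (t : Template 3 n) : ℕ :=
  Set.ncard {p : Fin n × Fin n × Fin n |
    ∃ (hxy : p.1 < p.2.1) (hyz : p.2.1 < p.2.2),
      ∃ a ∈ t ⟨(p.1, p.2.1), hxy⟩, ∃ b ∈ t ⟨(p.2.1, p.2.2), hyz⟩,
        ∃ d ∈ t ⟨(p.1, p.2.2), hxy.trans hyz⟩, a ≠ b ∧ b ≠ d ∧ a ≠ d}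

/-!
Write `e₁, e₂, e₃` for the numbers of edges whose palette has one, two or three colours and
`N = C(n, 2)`. The entropy bound gives `log₃ 2 · e₁ ≤ δN + (1 - log₃ 2) · e₃`. If `uv` is a full
edge and `z` a third vertex, the triple `uvz` admits a rainbow triangle unless `uz` and `vz` carry
the same single colour, and `(uv, z) ↦ (uz, v)` is injective on such pairs; hence
`e₃ (n - 2) ≤ 3 · #rainbow + e₁ n`. Since `log₃ 2 > 1/2`, the two bounds force `e₁ + e₃ = O(δN)`.

Every triple now admits a rainbow triangle, or meets an edge whose palette is not a pair, or
carries one pair palette `P` on all three edges. By Kruskal–Katona the `m_P` edges with palette `P`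
span at most `(√(2 m_P) + 3)³ / 6` triangles, so if every `m_P` were below `(1 - ε) N` these would
cover only about `(1 - ε/2) C(n, 3)` triples.
-/

open Finset
open scoped FinsetFamily

section Palettes

def HasRainbow (A B C : Finset (Fin 3)) : Prop :=
  ∃ a ∈ A, ∃ b ∈ B, ∃ c ∈ C, a ≠ b ∧ b ≠ c ∧ a ≠ c

instance (A B C : Finset (Fin 3)) : Decidable (HasRainbow A B C) := by
  unfold HasRainbow; infer_instance

lemma hasRainbow_comm_left {A B C : Finset (Fin 3)} : HasRainbow A B C ↔ HasRainbow B A C := by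
  unfold HasRainbow; grind

lemma hasRainbow_comm_right {A B C : Finset (Fin 3)} : HasRainbow A B C ↔ HasRainbow A C B := by
  unfold HasRainbow; grind

set_option synthInstance.maxSize 400 in
lemma hasRainbow_of_card_eq_two {A B C : Finset (Fin 3)} (hA : #A = 2) (hB : #B = 2)
    (hC : #C = 2) (h : ¬(A = B ∧ B = C)) : HasRainbow A B C := by
  have key : ∀ A B C : Finset (Fin 3), #A = 2 → #B = 2 → #C = 2 → ¬(A = B ∧ B = C) →
      HasRainbow A B C := by decide
  exact key A B C hA hB hC h

set_option synthInstance.maxSize 400 in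
lemma eq_singleton_of_not_hasRainbow {A B C : Finset (Fin 3)} (hA : A.Nonempty)
    (hB : B.Nonempty) (hC : #C = 3) (h : ¬HasRainbow A B C) : A = B ∧ #A = 1 := by
  have key : ∀ A B C : Finset (Fin 3), A.Nonempty → B.Nonempty → #C = 3 → ¬HasRainbow A B C →
      A = B ∧ #A = 1 := by decide
  exact key A B C hA hB hC h

lemma card_palette_mem {A : Finset (Fin 3)} (hA : A.Nonempty) : #A ∈ ({1, 2, 3} : Finset ℕ) := by
  have := card_le_univ A
  have := hA.card_pos
  simp only [Fintype.card_fin, mem_insert, mem_singleton] at *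
  omega

end Palettes

section Counting

variable {n : ℕ}

lemma card_univ_edge : #(univ : Finset (Edge n)) = n.choose 2 := by
  rw [card_univ, Fintype.card_subtype, Fintype.card_product_filter_lt, Fintype.card_fin]

def sortedTriples (n : ℕ) : Finset (Fin n × Fin n × Fin n) := {p | p.1 < p.2.1 ∧ p.2.1 < p.2.2}

lemma mem_sortedTriples {p : Fin n × Fin n × Fin n} :
    p ∈ sortedTriples n ↔ p.1 < p.2.1 ∧ p.2.1 < p.2.2 := by
  simp [sortedTriples]

def tripleSet (p : Fin n × Fin n × Fin n) : Finset (Fin n) := {p.1, p.2.1, p.2.2}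

lemma injOn_tripleSet : Set.InjOn tripleSet (sortedTriples n : Set (Fin n × Fin n × Fin n)) := by
  rintro ⟨x, y, z⟩ hp ⟨x', y', z'⟩ hp' h
  simp only [mem_coe, mem_sortedTriples] at hp hp'
  simp only [tripleSet, Finset.ext_iff, mem_insert, mem_singleton] at h
  have := h x; have := h y; have := h z; have := h x'; have := h y'; have := h z'
  simp only [Prod.mk.injEq]
  omega

lemma card_tripleSet {p : Fin n × Fin n × Fin n} (hp : p ∈ sortedTriples n) :
    #(tripleSet p) = 3 := by
  rw [mem_sortedTriples] at hp
  rw [tripleSet, card_insert_of_notMem (by simp [hp.1.ne, (hp.1.trans hp.2).ne]),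
    card_pair hp.2.ne]

lemma surjOn_tripleSet :
    Set.SurjOn tripleSet (sortedTriples n : Set (Fin n × Fin n × Fin n))
      (powersetCard 3 (univ : Finset (Fin n)) : Set (Finset (Fin n))) := by
  intro s hs
  simp only [mem_coe, mem_powersetCard, subset_univ, true_and] at hs
  set f := s.orderEmbOfFin hs
  have hf : (f 0, f 1, f 2) ∈ sortedTriples n :=
    mem_sortedTriples.2 ⟨f.strictMono (by decide), f.strictMono (by decide)⟩
  refine ⟨_, hf, eq_of_subset_of_card_le ?_ (by rw [hs, card_tripleSet hf])⟩
  simp [tripleSet, insert_subset_iff, f, orderEmbOfFin_mem]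

lemma card_sortedTriples : #(sortedTriples n) = n.choose 3 := by
  have : n.choose 3 = #(powersetCard 3 (univ : Finset (Fin n))) := by simp
  rw [this]
  exact card_nbij tripleSet (fun p hp => by simpa using card_tripleSet hp) injOn_tripleSet
    surjOn_tripleSet

end Counting

section Template

variable {k n : ℕ}

def pal (t : Template k n) (x y : Fin n) : Finset (Fin k) :=
  if h : x < y then t ⟨(x, y), h⟩ else if h : y < x then t ⟨(y, x), h⟩ else ∅

lemma pal_of_lt (t : Template k n) {x y : Fin n} (h : x < y) : pal t x y = t ⟨(x, y), h⟩ :=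
  dif_pos h

lemma pal_comm (t : Template k n) (x y : Fin n) : pal t x y = pal t y x := by
  unfold pal
  rcases lt_trichotomy x y with h | rfl | h
  · simp [h, h.not_gt]
  · rfl
  · simp [h, h.not_gt]

lemma pal_edge (t : Template k n) (e : Edge n) : pal t e.1.1 e.1.2 = t e := pal_of_lt t e.2

lemma pal_nonempty {t : Template k n} (ht : Proper t) {a b : Fin n} (h : a ≠ b) :
    (pal t a b).Nonempty := by
  rcases lt_or_gt_of_ne h with h | h
  · rw [pal_of_lt t h]; exact ht _
  · rw [pal_comm, pal_of_lt t h]; exact ht _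

variable (t : Template 3 n)

def edgesOfCard (j : ℕ) : Finset (Edge n) := {e | #(t e) = j}

def edgesWith (P : Finset (Fin 3)) : Finset (Edge n) := {e | t e = P}

def rainbowSet : Finset (Fin n × Fin n × Fin n) :=
  {p ∈ sortedTriples n | HasRainbow (pal t p.1 p.2.1) (pal t p.2.1 p.2.2) (pal t p.1 p.2.2)}

def monoTriples (P : Finset (Fin 3)) : Finset (Fin n × Fin n × Fin n) :=
  {p ∈ sortedTriples n | pal t p.1 p.2.1 = P ∧ pal t p.2.1 p.2.2 = P ∧ pal t p.1 p.2.2 = P}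

def twoPalettes : Finset (Finset (Fin 3)) := powersetCard 2 univ

lemma rainbowTriples_eq : rainbowTriples t = #(rainbowSet t) := by
  rw [rainbowTriples, ← Set.ncard_coe_finset]
  congr 1
  ext ⟨x, y, z⟩
  simp only [Set.mem_ofPred_eq, rainbowSet, coe_filter, mem_sortedTriples]
  constructor
  · rintro ⟨hxy, hyz, hr⟩
    refine ⟨⟨hxy, hyz⟩, ?_⟩
    rwa [pal_of_lt t hxy, pal_of_lt t hyz, pal_of_lt t (hxy.trans hyz)]
  · rintro ⟨⟨hxy, hyz⟩, hr⟩
    refine ⟨hxy, hyz, ?_⟩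
    rwa [pal_of_lt t hxy, pal_of_lt t hyz, pal_of_lt t (hxy.trans hyz)] at hr

lemma sum_card_edgesOfCard (ht : Proper t) :
    #(edgesOfCard t 1) + #(edgesOfCard t 2) + #(edgesOfCard t 3) = n.choose 2 := by
  rw [← card_univ_edge, card_eq_sum_card_fiberwise (s := univ) (fun e _ => card_palette_mem (ht e))]
  simp [edgesOfCard, add_assoc]

lemma ent_eq (ht : Proper t) :
    Ent t = #(edgesOfCard t 2) * Real.logb 3 2 + #(edgesOfCard t 3) := by
  have hfibre (j : ℕ) : ∑ e ∈ univ with #(t e) = j, Real.logb 3 #(t e)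
      = #(edgesOfCard t j) * Real.logb 3 j := by
    rw [sum_congr rfl fun e he => by rw [(mem_filter.1 he).2], sum_const, nsmul_eq_mul]
    rfl
  rw [Ent, ← sum_fiberwise_of_maps_to (s := univ) (fun e _ => card_palette_mem (ht e))]
  simp [hfibre]

lemma sum_card_edgesWith_le : ∑ P ∈ twoPalettes, #(edgesWith t P) ≤ n.choose 2 := by
  simp only [edgesWith]
  rw [← card_univ_edge, sum_card_fiberwise_eq_card_filter]
  exact card_filter_le _ _

lemma ncard_ne_add_card_edgesWith (P : Finset (Fin 3)) :
    {e : Edge n | t e ≠ P}.ncard + #(edgesWith t P) = n.choose 2 := by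
  rw [← card_univ_edge, ← card_filter_add_card_filter_not (s := univ) (p := fun e => t e ≠ P)]
  simp [edgesWith, Set.ncard_eq_toFinset_card']

end Template

section EdgeVertex

variable {n : ℕ}

def triangleOf (e : Edge n) (z : Fin n) : Fin n × Fin n × Fin n :=
  if z < e.1.1 then (z, e.1.1, e.1.2) else if z < e.1.2 then (e.1.1, z, e.1.2)
  else (e.1.1, e.1.2, z)

def positionIn (e : Edge n) (z : Fin n) : Fin 3 :=
  if z < e.1.1 then 0 else if z < e.1.2 then 1 else 2

lemma triangleOf_cases (e : Edge n) {z : Fin n} (hz : z ∉ ({e.1.1, e.1.2} : Finset (Fin n))) :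
    (z < e.1.1 ∧ triangleOf e z = (z, e.1.1, e.1.2) ∧ positionIn e z = 0) ∨
    (e.1.1 < z ∧ z < e.1.2 ∧ triangleOf e z = (e.1.1, z, e.1.2) ∧ positionIn e z = 1) ∨
    (e.1.2 < z ∧ triangleOf e z = (e.1.1, e.1.2, z) ∧ positionIn e z = 2) := by
  obtain ⟨⟨u, v⟩, huv⟩ := e
  simp only [mem_insert, mem_singleton, not_or] at hz
  unfold triangleOf positionIn
  rcases lt_or_gt_of_ne hz.1 with h | h
  · simp [h]
  · rcases lt_or_gt_of_ne hz.2 with h' | h'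
    · simp [h, h', h.not_gt]
    · simp [h', h.not_gt, h'.not_gt, huv.trans h']

def edgeVertexPairs (E : Finset (Edge n)) : Finset ((_ : Edge n) × Fin n) :=
  E.sigma fun e => {e.1.1, e.1.2}ᶜ

lemma card_edgeVertexPairs (E : Finset (Edge n)) : #(edgeVertexPairs E) = #E * (n - 2) := by
  rw [edgeVertexPairs, card_sigma, sum_congr rfl fun e _ => by
    rw [card_compl, card_pair e.2.ne, Fintype.card_fin], sum_const, smul_eq_mul]

lemma injOn_triangleOf_positionIn (E : Finset (Edge n)) :
    Set.InjOn (fun q : (_ : Edge n) × Fin n => (triangleOf q.1 q.2, positionIn q.1 q.2))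
      (edgeVertexPairs E : Set ((_ : Edge n) × Fin n)) := by
  rintro ⟨⟨⟨u, v⟩, huv⟩, z⟩ hq ⟨⟨⟨u', v'⟩, huv'⟩, z'⟩ hq' h
  simp only [edgeVertexPairs, coe_sigma, Set.mem_sigma_iff, mem_coe, mem_compl] at hq hq'
  simp only [Prod.mk.injEq] at h
  rcases triangleOf_cases ⟨(u, v), huv⟩ hq.2 with ⟨-, h1, h2⟩ | ⟨-, -, h1, h2⟩ | ⟨-, h1, h2⟩ <;>
    rcases triangleOf_cases ⟨(u', v'), huv'⟩ hq'.2 with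
      ⟨-, h1', h2'⟩ | ⟨-, -, h1', h2'⟩ | ⟨-, h1', h2'⟩ <;>
    simp_all

end EdgeVertex

section FullEdges

variable {n : ℕ} (t : Template 3 n)

lemma exists_edge_sym2_eq {a b : Fin n} (h : a ≠ b) :
    ∃ e : Edge n, s(e.1.1, e.1.2) = s(a, b) ∧ t e = pal t a b := by
  rcases lt_or_gt_of_ne h with h | h
  · exact ⟨⟨(a, b), h⟩, rfl, (pal_of_lt t h).symm⟩
  · exact ⟨⟨(b, a), h⟩, Sym2.eq_swap, by rw [pal_comm, pal_of_lt t h]⟩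

lemma triangleOf_mem_rainbowSet_iff (e : Edge n) {z : Fin n}
    (hz : z ∉ ({e.1.1, e.1.2} : Finset (Fin n))) :
    triangleOf e z ∈ rainbowSet t ↔ HasRainbow (pal t e.1.1 z) (pal t e.1.2 z) (t e) := by
  rw [← pal_edge t e]
  rcases triangleOf_cases e hz with ⟨h, he, -⟩ | ⟨h, h', he, -⟩ | ⟨h, he, -⟩
  · simp only [rainbowSet, mem_filter, mem_sortedTriples, he, h, e.2, true_and]
    rw [hasRainbow_comm_right, pal_comm t z, pal_comm t z]
  · simp only [rainbowSet, mem_filter, mem_sortedTriples, he, h, h', true_and]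
    rw [pal_comm t z]
  · simp only [rainbowSet, mem_filter, mem_sortedTriples, he, h, e.2, true_and]
    rw [hasRainbow_comm_left, hasRainbow_comm_right, hasRainbow_comm_left]

lemma card_filter_rainbow_le (E : Finset (Edge n)) :
    #{q ∈ edgeVertexPairs E | triangleOf q.1 q.2 ∈ rainbowSet t} ≤ 3 * #(rainbowSet t) := by
  have := card_le_card_of_injOn (t := rainbowSet t ×ˢ (univ : Finset (Fin 3)))
    (fun q : (_ : Edge n) × Fin n => (triangleOf q.1 q.2, positionIn q.1 q.2))
    (fun q hq => mem_product.2 ⟨(mem_filter.1 hq).2, mem_univ _⟩)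
    ((injOn_triangleOf_positionIn E).mono (coe_subset.2 (filter_subset _ _)))
  simpa [mul_comm] using this

lemma pal_eq_of_notMem_rainbowSet (ht : Proper t) {e : Edge n}
    (he : #(t e) = 3) {z : Fin n} (hz : z ∉ ({e.1.1, e.1.2} : Finset (Fin n)))
    (hnr : triangleOf e z ∉ rainbowSet t) :
    pal t e.1.1 z = pal t e.1.2 z ∧ #(pal t e.1.1 z) = 1 := by
  simp only [mem_insert, mem_singleton, not_or] at hz
  rw [triangleOf_mem_rainbowSet_iff t e (by simp [hz])] at hnr
  exact eq_singleton_of_not_hasRainbow (pal_nonempty ht (Ne.symm hz.1))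
    (pal_nonempty ht (Ne.symm hz.2)) he hnr

lemma card_filter_not_rainbow_le (ht : Proper t) :
    #{q ∈ edgeVertexPairs (edgesOfCard t 3) | triangleOf q.1 q.2 ∉ rainbowSet t}
      ≤ #(edgesOfCard t 1) * n := by
  set Q := {q ∈ edgeVertexPairs (edgesOfCard t 3) | triangleOf q.1 q.2 ∉ rainbowSet t}
  have hQ : ∀ q ∈ Q, #(t q.1) = 3 ∧ q.2 ≠ q.1.1.1 ∧ q.2 ≠ q.1.1.2 ∧
      pal t q.1.1.1 q.2 = pal t q.1.1.2 q.2 ∧ #(pal t q.1.1.1 q.2) = 1 := by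
    intro q hq
    simp only [Q, edgeVertexPairs, edgesOfCard, mem_filter, mem_sigma, mem_univ, true_and,
      mem_compl] at hq
    have hz := hq.1.2
    simp only [mem_insert, mem_singleton, not_or] at hz
    exact ⟨hq.1.1, hz.1, hz.2, pal_eq_of_notMem_rainbowSet t ht hq.1.1 hq.1.2 hq.2⟩
  calc #Q ≤ #((edgesOfCard t 1).image (fun e : Edge n => s(e.1.1, e.1.2)) ×ˢ univ) := by
        refine card_le_card_of_injOn (fun q => (s(q.1.1.1, q.2), q.1.1.2)) (fun q hq => ?_) ?_
        · obtain ⟨-, hzu, -, -, h1⟩ := hQ q hq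
          obtain ⟨e, he, hte⟩ := exists_edge_sym2_eq t (Ne.symm hzu)
          simp only [mem_coe, mem_product, mem_image, mem_univ, and_true]
          exact ⟨e, by simpa [edgesOfCard, hte] using h1, he⟩
        · rintro ⟨⟨⟨u, v⟩, huv⟩, z⟩ hq ⟨⟨⟨u', v'⟩, huv'⟩, z'⟩ hq' h
          obtain ⟨-, -, -, heq, h1⟩ := hQ _ hq
          obtain ⟨hfull', -, -, -, -⟩ := hQ _ hq'
          simp only [Prod.mk.injEq, Sym2.eq_iff] at h heq h1 hfull'
          obtain ⟨⟨rfl, rfl⟩ | ⟨rfl, rfl⟩, rfl⟩ := h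
          · rfl
          · -- swapped endpoints: the full edge `u'v = zv` would have a singleton palette
            rw [← pal_of_lt t huv', pal_comm, ← heq] at hfull'
            omega
    _ ≤ #(edgesOfCard t 1) * n := by
        rw [card_product, card_univ, Fintype.card_fin]
        exact Nat.mul_le_mul_right _ card_image_le

lemma card_edgesOfCard_three_mul_le (ht : Proper t) :
    #(edgesOfCard t 3) * (n - 2) ≤ 3 * #(rainbowSet t) + #(edgesOfCard t 1) * n := by
  rw [← card_edgeVertexPairs, ← card_filter_add_card_filter_not
    (p := fun q : (_ : Edge n) × Fin n => triangleOf q.1 q.2 ∈ rainbowSet t)]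
  exact add_le_add (card_filter_rainbow_le t _) (card_filter_not_rainbow_le t ht)

end FullEdges

section Decomposition

variable {n : ℕ} (t : Template 3 n)

def trianglesThrough (E : Finset (Edge n)) : Finset (Fin n × Fin n × Fin n) :=
  E.biUnion fun e => univ.image (triangleOf e)

lemma card_trianglesThrough_le (E : Finset (Edge n)) : #(trianglesThrough E) ≤ #E * n :=
  calc #(trianglesThrough E) ≤ ∑ e ∈ E, #(univ.image (triangleOf e)) := card_biUnion_le
    _ ≤ ∑ e ∈ E, n := sum_le_sum fun e _ => card_image_le.trans (by simp)
    _ = #E * n := by rw [sum_const, smul_eq_mul]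

lemma mem_trianglesThrough {E : Finset (Edge n)} {x y z : Fin n} (hxy : x < y) (hyz : y < z)
    (hE : ⟨(x, y), hxy⟩ ∈ E ∨ ⟨(y, z), hyz⟩ ∈ E ∨ ⟨(x, z), hxy.trans hyz⟩ ∈ E) :
    (x, y, z) ∈ trianglesThrough E := by
  simp only [trianglesThrough, mem_biUnion, mem_image, mem_univ, true_and]
  rcases hE with h | h | h
  · exact ⟨_, h, z, by simp [triangleOf, hyz.not_gt, (hxy.trans hyz).not_gt]⟩
  · exact ⟨_, h, x, by simp [triangleOf, hxy]⟩
  · exact ⟨_, h, y, by simp [triangleOf, hyz, hxy.not_gt]⟩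

lemma sortedTriples_subset (ht : Proper t) :
    sortedTriples n ⊆ trianglesThrough (edgesOfCard t 1 ∪ edgesOfCard t 3) ∪ rainbowSet t ∪
      twoPalettes.biUnion (monoTriples t) := by
  rintro ⟨x, y, z⟩ hp
  obtain ⟨hxy, hyz⟩ := mem_sortedTriples.1 hp
  have hcard (e : Edge n) (he : #(t e) ≠ 2) : e ∈ edgesOfCard t 1 ∪ edgesOfCard t 3 := by
    have := card_palette_mem (ht e)
    simp only [mem_insert, mem_singleton] at this
    simp only [edgesOfCard, mem_union, mem_filter, mem_univ, true_and]
    omega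
  by_cases h2 : #(pal t x y) = 2 ∧ #(pal t y z) = 2 ∧ #(pal t x z) = 2
  · obtain ⟨hA, hB, hC⟩ := h2
    by_cases hmono : pal t x y = pal t y z ∧ pal t y z = pal t x z
    · refine mem_union_right _ (mem_biUnion.2 ⟨pal t x y, by simpa [twoPalettes] using hA, ?_⟩)
      simp [monoTriples, hp, hmono]
    · exact mem_union_left _ (mem_union_right _ (by
        simp [rainbowSet, hp, hasRainbow_of_card_eq_two hA hB hC hmono]))
  · refine mem_union_left _ (mem_union_left _ (mem_trianglesThrough hxy hyz ?_))
    rw [pal_of_lt t hxy, pal_of_lt t hyz, pal_of_lt t (hxy.trans hyz)] at h2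
    simp only [not_and_or] at h2
    rcases h2 with h | h | h <;> simp [hcard _ h]

lemma choose_three_le_sum_card (ht : Proper t) :
    n.choose 3 ≤ (#(edgesOfCard t 1) + #(edgesOfCard t 3)) * n + #(rainbowSet t) +
      ∑ P ∈ twoPalettes, #(monoTriples t P) := by
  rw [← card_sortedTriples]
  refine (card_le_card (sortedTriples_subset t ht)).trans ?_
  refine (card_union_le _ _).trans (add_le_add ((card_union_le _ _).trans (add_le_add ?_ le_rfl))
    card_biUnion_le)
  exact (card_trianglesThrough_le _).trans (Nat.mul_le_mul_right _ (card_union_le _ _))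

end Decomposition

section KruskalKatona

lemma six_mul_card_le_of_sized_three {n : ℕ} {𝒜 : Finset (Finset (Fin n))}
    (h𝒜 : (𝒜 : Set (Finset (Fin n))).Sized 3) :
    6 * (#𝒜 : ℝ) ≤ (√(2 * #(∂ 𝒜)) + 3) ^ 3 := by
  set m := #(∂ 𝒜)
  set k := Nat.sqrt (2 * m) + 3
  have hm : m < k.choose 2 := by
    have hR : (2 * m : ℝ) < (Nat.sqrt (2 * m) + 1) ^ 2 := by
      exact_mod_cast Nat.lt_succ_sqrt' (2 * m)
    have : (m : ℝ) < k.choose 2 := by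
      rw [Nat.cast_choose_two]
      push_cast [k]
      nlinarith [(Nat.sqrt (2 * m)).cast_nonneg (α := ℝ)]
    exact_mod_cast this
  have hA : #𝒜 ≤ k.choose 3 := by
    by_cases hkn : k ≤ n
    · by_contra! h
      have : k.choose 2 ≤ m := by
        simpa using kruskal_katona_lovasz_form (i := 1) (by norm_num) (by omega) hkn h𝒜 h.le
      omega
    · exact h𝒜.card_le.trans (by simpa using Nat.choose_le_choose 3 (by omega : n ≤ k))
  have hk : (k : ℝ) ≤ √(2 * m) + 3 := by
    have := Real.nat_sqrt_le_real_sqrt (a := 2 * m)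
    push_cast [k] at this ⊢
    linarith
  calc 6 * (#𝒜 : ℝ) ≤ 6 * (k.choose 3 : ℝ) := by gcongr
    _ ≤ (k : ℝ) ^ 3 := by
      have := Nat.choose_le_pow_div (α := ℝ) 3 k
      norm_num [Nat.factorial] at this
      linarith
    _ ≤ (√(2 * m) + 3) ^ 3 := by gcongr

end KruskalKatona

section Monochromatic

variable {n : ℕ} (t : Template 3 n)

lemma card_monoTriples_le (P : Finset (Fin 3)) :
    6 * (#(monoTriples t P) : ℝ) ≤ (√(2 * #(edgesWith t P)) + 3) ^ 3 := by
  set 𝒜 := (monoTriples t P).image tripleSet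
  have h𝒜 : #𝒜 = #(monoTriples t P) :=
    card_image_of_injOn (injOn_tripleSet.mono (coe_subset.2 (filter_subset _ _)))
  have hsized : (𝒜 : Set (Finset (Fin n))).Sized 3 := by
    intro A hA
    obtain ⟨p, hp, rfl⟩ := mem_image.1 hA
    exact card_tripleSet (mem_filter.1 hp).1
  have hshadow : #(∂ 𝒜) ≤ #(edgesWith t P) := by
    refine (card_le_card fun s hs => ?_).trans
      (card_image_le (f := fun e : Edge n => ({e.1.1, e.1.2} : Finset (Fin n))))
    obtain ⟨A, hA, a, ha, rfl⟩ := mem_shadow_iff.1 hs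
    obtain ⟨⟨x, y, z⟩, hp, rfl⟩ := mem_image.1 hA
    simp only [monoTriples, mem_filter, mem_sortedTriples] at hp
    obtain ⟨⟨hxy, hyz⟩, h1, h2, h3⟩ := hp
    simp only [tripleSet, mem_insert, mem_singleton] at ha
    simp only [mem_image, edgesWith, mem_filter, mem_univ, true_and]
    rcases ha with rfl | rfl | rfl
    · refine ⟨⟨(y, z), hyz⟩, by rwa [← pal_of_lt t hyz], ?_⟩
      simp [tripleSet, hxy.ne, (hxy.trans hyz).ne]
    · refine ⟨⟨(x, z), hxy.trans hyz⟩, by rwa [← pal_of_lt t (hxy.trans hyz)], ?_⟩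
      simp [tripleSet, erase_insert_of_ne, hxy.ne, hyz.ne]
    · refine ⟨⟨(x, y), hxy⟩, by rwa [← pal_of_lt t hxy], ?_⟩
      simp [tripleSet, erase_insert_of_ne, hyz.ne, (hxy.trans hyz).ne]
  rw [← h𝒜]
  refine (six_mul_card_le_of_sized_three hsized).trans ?_
  gcongr

end Monochromatic

section Estimates

lemma five_eighths_le_logb_three_two : (5 / 8 : ℝ) ≤ Real.logb 3 2 := by
  rw [Real.logb, le_div_iff₀ (Real.log_pos (by norm_num))]
  have h := Real.log_le_log (by norm_num) (show (3 : ℝ) ^ 5 ≤ 2 ^ 8 by norm_num)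
  rw [Real.log_pow, Real.log_pow] at h
  push_cast at h
  linarith

lemma logb_three_two_le_one : Real.logb 3 2 ≤ 1 := by
  rw [Real.logb_le_iff_le_rpow (by norm_num) (by norm_num)]
  norm_num

lemma add_le_of_entropy_bound {L δ N n e₁ e₂ e₃ : ℝ} (hL : 5 / 8 ≤ L) (hL₁ : L ≤ 1)
    (hn : 40 ≤ n) (hδ : 0 ≤ δ) (hN : 0 ≤ N) (he₁ : 0 ≤ e₁)
    (hsum : e₁ + e₂ + e₃ = N) (hent : (L - δ) * N ≤ e₂ * L + e₃)
    (hfull : e₃ * (n - 2) ≤ δ * N * (n - 2) + e₁ * n) :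
    e₁ + e₃ ≤ 16 * δ * N := by
  have h₁ : L * e₁ ≤ δ * N + (1 - L) * e₃ := by linear_combination hent + L * hsum
  have hδN : 0 ≤ δ * N := mul_nonneg hδ hN
  have h₂ : e₁ * ((2 * L - 1) * n - 2 * L) ≤ (2 - L) * (δ * N * (n - 2)) := by
    nlinarith [mul_le_mul_of_nonneg_right h₁ (by linarith : (0 : ℝ) ≤ n - 2),
      mul_le_mul_of_nonneg_left hfull (by linarith : (0 : ℝ) ≤ 1 - L)]
  have h₃ : e₁ ≤ 7 * δ * N := by
    nlinarith [mul_nonneg he₁ (by linarith : (0 : ℝ) ≤ 2 * L - 5 / 4),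
      mul_nonneg hδN (by linarith : (0 : ℝ) ≤ L - 5 / 8)]
  nlinarith

lemma six_mul_le_of_le_cube {m θ n x : ℝ} (hm : 0 ≤ m) (hθ₀ : 0 ≤ θ) (hθ₁ : θ ≤ 1) (hn : 0 ≤ n)
    (hmn : 2 * m ≤ (θ * n) ^ 2) (hx : 6 * x ≤ (√(2 * m) + 3) ^ 3) :
    6 * x ≤ 2 * m * (θ * n + 9) + 27 * (n + 1) := by
  set a := √(2 * m)
  have ha : 0 ≤ a := Real.sqrt_nonneg _
  have ha2 : a ^ 2 = 2 * m := Real.sq_sqrt (by linarith)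
  have haθ : a ≤ θ * n := (Real.sqrt_le_sqrt hmn).trans_eq (Real.sqrt_sq (by positivity))
  nlinarith [mul_le_mul_of_nonneg_right haθ (sq_nonneg a), mul_le_mul_of_nonneg_right hθ₁ hn]

lemma mul_lt_of_counts {ε n N T e R S M : ℝ} (hε : 0 < ε) (hε₁ : ε ≤ 1) (hn : 4 ≤ n)
    (hN : 2 * N = n * (n - 1)) (hT : 3 * T = N * (n - 2))
    (hdec : T ≤ e * n + R + S) (he : e ≤ 16 * (ε / 1000) * N) (hR : R ≤ ε / 1000 * T)
    (hS : 6 * S ≤ 2 * M * ((1 - ε / 2) * n + 9) + 81 * (n + 1)) (hM : M ≤ N) :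
    ε * n < 1000 := by
  by_contra! hεn
  have hN0 : 0 ≤ N := by nlinarith
  have hθ : 0 ≤ (1 - ε / 2) * n + 9 := by nlinarith
  have hS' : 6 * S ≤ 2 * N * ((1 - ε / 2) * n + 9) + 81 * (n + 1) :=
    hS.trans (by nlinarith [mul_le_mul_of_nonneg_right hM hθ])
  have he' : e * n ≤ 16 * (ε / 1000) * N * n := mul_le_mul_of_nonneg_right he (by linarith)
  have hkey : ε * n * N * (902 / 1000) ≤ 22 * N + 81 * (n + 1) := by
    nlinarith [mul_nonneg (mul_nonneg hε.le hN0) (by linarith : (0 : ℝ) ≤ 2)]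
  nlinarith [mul_le_mul_of_nonneg_right hεn hN0]

end Estimates

section Stability

variable {n : ℕ} {t : Template 3 n}

lemma card_twoPalettes : #twoPalettes = 3 := by decide

lemma six_mul_sum_card_monoTriples_le {θ : ℝ} (hθ₀ : 0 ≤ θ) (hθ₁ : θ ≤ 1)
    (h : ∀ P ∈ twoPalettes, 2 * (#(edgesWith t P) : ℝ) ≤ (θ * n) ^ 2) :
    6 * ∑ P ∈ twoPalettes, (#(monoTriples t P) : ℝ) ≤
      2 * (∑ P ∈ twoPalettes, (#(edgesWith t P) : ℝ)) * (θ * n + 9) + 81 * (n + 1) := by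
  calc 6 * ∑ P ∈ twoPalettes, (#(monoTriples t P) : ℝ)
      = ∑ P ∈ twoPalettes, 6 * (#(monoTriples t P) : ℝ) := mul_sum _ _ _
    _ ≤ ∑ P ∈ twoPalettes, (2 * (#(edgesWith t P) : ℝ) * (θ * n + 9) + 27 * (n + 1)) :=
        sum_le_sum fun P hP => six_mul_le_of_le_cube (by positivity) hθ₀ hθ₁ (by positivity)
          (h P hP) (card_monoTriples_le t P)
    _ = _ := by rw [sum_add_distrib, sum_const, card_twoPalettes, ← sum_mul, ← mul_sum]; ring

theorem exists_twoPalette_of_le_one {ε : ℝ} (hε : 0 < ε) (hε₁ : ε ≤ 1) (hn : 1000 / ε ≤ n)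
    (ht : Proper t) (hEnt : (Real.logb 3 2 - ε / 1000) * n.choose 2 ≤ Ent t)
    (hR : (rainbowTriples t : ℝ) ≤ ε / 1000 * n.choose 3) :
    ∃ P ∈ twoPalettes, (1 - ε) * n.choose 2 ≤ #(edgesWith t P) := by
  by_contra! h
  have hεn : 1000 ≤ ε * n := by rwa [div_le_iff₀ hε, mul_comm] at hn
  have hn₁₀₀₀ : (1000 : ℝ) ≤ n := by nlinarith
  have h2 : 2 ≤ n := by exact_mod_cast (show (2 : ℝ) ≤ n by linarith)
  have hN : 2 * (n.choose 2 : ℝ) = n * (n - 1) := by rw [Nat.cast_choose_two]; ring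
  have hT : 3 * (n.choose 3 : ℝ) = n.choose 2 * (n - 2) := by
    have h := congrArg (Nat.cast (R := ℝ)) (Nat.choose_succ_right_eq n 2)
    push_cast [Nat.cast_sub h2] at h
    linarith
  have hsum : (#(edgesOfCard t 1) : ℝ) + #(edgesOfCard t 2) + #(edgesOfCard t 3) =
      n.choose 2 := by
    exact_mod_cast sum_card_edgesOfCard t ht
  rw [ent_eq t ht] at hEnt
  rw [rainbowTriples_eq t] at hR
  have hfull : (#(edgesOfCard t 3) : ℝ) * (n - 2) ≤
      ε / 1000 * n.choose 2 * (n - 2) + #(edgesOfCard t 1) * n := by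
    have h : (#(edgesOfCard t 3) : ℝ) * (n - 2) ≤ 3 * #(rainbowSet t) + #(edgesOfCard t 1) * n := by
      exact_mod_cast card_edgesOfCard_three_mul_le t ht
    linear_combination h + 3 * hR + ε / 1000 * hT
  have he := add_le_of_entropy_bound five_eighths_le_logb_three_two logb_three_two_le_one
    (by linarith) (by positivity) (by positivity) (by positivity) hsum hEnt hfull
  have hdec : (n.choose 3 : ℝ) ≤ (#(edgesOfCard t 1) + #(edgesOfCard t 3) : ℝ) * n +
      #(rainbowSet t) + ∑ P ∈ twoPalettes, (#(monoTriples t P) : ℝ) := by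
    exact_mod_cast choose_three_le_sum_card t ht
  have hS := six_mul_sum_card_monoTriples_le (t := t) (θ := 1 - ε / 2) (by linarith) (by linarith)
    fun P hP => by nlinarith [h P hP]
  have hM : ∑ P ∈ twoPalettes, (#(edgesWith t P) : ℝ) ≤ n.choose 2 := by
    exact_mod_cast sum_card_edgesWith_le t
  exact (mul_lt_of_counts hε hε₁ (by linarith) hN hT hdec he hR hS hM).not_ge hεn

end Stability

/-- Stability for rainbow-triangle-free 3-colourings (Theorem 4.15). -/
theorem rainbow_free_stability (ε : ℝ) (hε : 0 < ε) :
    ∃ (δ : ℝ) (n₀ : ℕ), 0 < δ ∧ ∀ n, n₀ ≤ n → ∀ t : Template 3 n, Proper t →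
      (Real.logb 3 2 - δ) * (n.choose 2 : ℝ) ≤ Ent t →
      (rainbowTriples t : ℝ) ≤ δ * (n.choose 3 : ℝ) →
      ∃ c₁ c₂ : Fin 3, c₁ ≠ c₂ ∧
        (({e : Edge n | t e ≠ {c₁, c₂}}).ncard : ℝ) ≤ ε * (n.choose 2 : ℝ) := by
  have hε' : 0 < min ε 1 := lt_min hε one_pos
  refine ⟨min ε 1 / 1000, ⌈1000 / min ε 1⌉₊, by positivity, fun n hn t ht hEnt hR => ?_⟩
  obtain ⟨P, hP, hcard⟩ := exists_twoPalette_of_le_one hε' (min_le_right _ _)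
    ((Nat.le_ceil _).trans (by exact_mod_cast hn)) ht hEnt hR
  obtain ⟨c₁, c₂, hc, rfl⟩ := card_eq_two.1 (mem_powersetCard.1 hP).2
  have hsplit : ({e : Edge n | t e ≠ {c₁, c₂}}.ncard : ℝ) + #(edgesWith t {c₁, c₂}) =
      n.choose 2 := by
    exact_mod_cast ncard_ne_add_card_edgesWith t {c₁, c₂}
  refine ⟨c₁, c₂, hc, ?_⟩
  nlinarith [min_le_left ε 1, (n.choose 2).cast_nonneg (α := ℝ)]
end

section
/- Extremal entropy for proper-path 3-colouring templates (non-example for containers on sparse sequences): For every n ≥ 3, the maximum of Ent(t) over all 3-colouring templates t for the path P_n such that every realisation of t has no two consecutive edges of the same colour equals ⌈(n−1)/2⌉·log₃2. -/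
/-- A 3-colouring of the edges of the path `P_n`: edge `i` (for `0 ≤ i < n - 1`,
joining vertices `i` and `i + 1`) receives colour `c i`. -/
abbrev PathCol (n : ℕ) := Fin (n - 1) → Fin 3

/-- A 3-colouring template for the path `P_n`: a nonempty palette at each edge. -/
abbrev PathTemp (n : ℕ) := Fin (n - 1) → Finset (Fin 3)

def PProper {n : ℕ} (t : PathTemp n) : Prop := ∀ e, (t e).Nonempty

def PRealises {n : ℕ} (c : PathCol n) (t : PathTemp n) : Prop := ∀ e, c e ∈ t e

/-- The entropy (base 3) of a path template. -/
noncomputable def PEnt {n : ℕ} (t : PathTemp n) : ℝ :=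
  ∑ e : Fin (n - 1), Real.logb 3 ((t e).card)

/-- No two consecutive edges of the path receive the same colour. -/
def ProperlyColoured {n : ℕ} (c : PathCol n) : Prop :=
  ∀ (i : ℕ) (h : i + 1 < n - 1), c ⟨i, Nat.lt_of_succ_lt h⟩ ≠ c ⟨i + 1, h⟩

/-!
If two consecutive palettes shared a colour, colouring both edges with it (and every other edge
from its palette) would realise the template improperly; so consecutive palettes are disjoint
and their sizes add up to at most 3. As every edge of `P_n`, `n ≥ 3`, has a neighbour, each
palette has one or two colours, and the two-colour palettes sit on pairwise non-consecutive
edges, of which there are at most `⌈(n-1)/2⌉`. The entropy counts `log₃ 2` for each of them.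
Alternating the palettes `{0, 1}` and `{2}` attains the bound.
-/

open Finset

theorem Finset.card_filter_mod_two_eq_zero_range (m : ℕ) :
    #{i ∈ range m | i % 2 = 0} = (m + 1) / 2 := by
  induction m with
  | zero => simp
  | succ m ih =>
    rw [range_add_one, filter_insert]
    split_ifs with h
    · rw [card_insert_of_notMem (by simp), ih]
      omega
    · rw [ih]
      omega

theorem Fin.card_le_of_forall_val_ne_succ {m : ℕ} {S : Finset (Fin m)}
    (hS : ∀ i ∈ S, ∀ j ∈ S, j.val ≠ i.val + 1) : #S ≤ (m + 1) / 2 := by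
  have hpairs : Set.InjOn (fun i : Fin m => i.val / 2) S := by
    intro i hi j hj hij
    simp only at hij
    have := hS i hi j hj
    have := hS j hj i hi
    omega
  have hmaps : Set.MapsTo (fun i : Fin m => i.val / 2) S (range ((m + 1) / 2)) := by
    intro i _
    simp only [coe_range, Set.mem_Iio]
    omega
  simpa using card_le_card_of_injOn _ hmaps hpairs

def ForcesProper {n : ℕ} (t : PathTemp n) : Prop :=
  ∀ c, PRealises c t → ProperlyColoured c

section Template

variable {n : ℕ} {t : PathTemp n}

theorem PProper.exists_realises (ht : PProper t) : ∃ c : PathCol n, PRealises c t :=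
  ⟨fun e => (ht e).choose, fun e => (ht e).choose_spec⟩

theorem ForcesProper.disjoint_succ (ht : PProper t) (hf : ForcesProper t) {i : ℕ}
    (hi : i + 1 < n - 1) : Disjoint (t ⟨i, by omega⟩) (t ⟨i + 1, hi⟩) := by
  rw [disjoint_left]
  intro a ha₀ ha₁
  obtain ⟨c, hc⟩ := ht.exists_realises
  let c' : PathCol n := Function.update (Function.update c ⟨i, by omega⟩ a) ⟨i + 1, hi⟩ a
  have hc' : PRealises c' t := by
    intro e
    simp only [c', Function.update_apply]
    split_ifs with h₁ h₀
    · exact h₁ ▸ ha₁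
    · exact h₀ ▸ ha₀
    · exact hc e
  apply hf c' hc' i hi
  simp [c', Fin.ext_iff]

theorem forcesProper_of_disjoint_succ
    (h : ∀ i (hi : i + 1 < n - 1), Disjoint (t ⟨i, by omega⟩) (t ⟨i + 1, hi⟩)) :
    ForcesProper t := fun _ hc i hi heq =>
  disjoint_left.1 (h i hi) (hc _) (heq ▸ hc _)

theorem ForcesProper.card_add_card_succ_le (ht : PProper t) (hf : ForcesProper t) {i : ℕ}
    (hi : i + 1 < n - 1) : #(t ⟨i, by omega⟩) + #(t ⟨i + 1, hi⟩) ≤ 3 := by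
  rw [← card_union_of_disjoint (hf.disjoint_succ ht hi)]
  exact (card_le_univ _).trans_eq (Fintype.card_fin 3)

theorem ForcesProper.card_le_two (hn : 3 ≤ n) (ht : PProper t) (hf : ForcesProper t)
    (e : Fin (n - 1)) : #(t e) ≤ 2 := by
  by_cases he : e.val + 1 < n - 1
  · have hsum := hf.card_add_card_succ_le ht he
    have := (ht ⟨e.val + 1, he⟩).card_pos
    simp only [Fin.eta] at hsum
    omega
  · have hi : e.val - 1 + 1 < n - 1 := by omega
    have hsum := hf.card_add_card_succ_le ht hi
    have := (ht ⟨e.val - 1, by omega⟩).card_pos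
    rw [show (⟨e.val - 1 + 1, hi⟩ : Fin (n - 1)) = e by ext; simp; omega] at hsum
    omega

theorem PEnt_eq_card_mul_logb (ht : PProper t) (h2 : ∀ e, #(t e) ≤ 2) :
    PEnt t = #{e | #(t e) = 2} * Real.logb 3 2 := by
  have hterm : ∀ e, Real.logb 3 #(t e) = if #(t e) = 2 then Real.logb 3 2 else 0 := by
    intro e
    have := (ht e).card_pos
    obtain h | h : #(t e) = 1 ∨ #(t e) = 2 := by have := h2 e; omega
    all_goals simp [h]
  simp only [PEnt, hterm, sum_ite, sum_const, nsmul_eq_mul, mul_zero, add_zero]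

theorem ForcesProper.PEnt_le (hn : 3 ≤ n) (ht : PProper t) (hf : ForcesProper t) :
    PEnt t ≤ (((n - 1 + 1) / 2 : ℕ) : ℝ) * Real.logb 3 2 := by
  rw [PEnt_eq_card_mul_logb ht (hf.card_le_two hn ht)]
  gcongr
  · exact Real.logb_nonneg (by norm_num) (by norm_num)
  refine Fin.card_le_of_forall_val_ne_succ fun e he e₁ he₁ hsucc => ?_
  have hlt : e.val + 1 < n - 1 := hsucc ▸ e₁.isLt
  have := hf.card_add_card_succ_le ht hlt
  rw [Fin.eta, show (⟨e.val + 1, hlt⟩ : Fin (n - 1)) = e₁ from Fin.ext hsucc.symm] at this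
  simp only [mem_filter, mem_univ, true_and] at he he₁
  omega

end Template

def alternatingTemp (n : ℕ) : PathTemp n :=
  fun e => if e.val % 2 = 0 then {0, 1} else {2}

theorem card_alternatingTemp {n : ℕ} (e : Fin (n - 1)) :
    #(alternatingTemp n e) = if e.val % 2 = 0 then 2 else 1 := by
  unfold alternatingTemp
  split_ifs <;> rfl

theorem pProper_alternatingTemp (n : ℕ) : PProper (alternatingTemp n) := by
  intro e
  rw [← card_pos, card_alternatingTemp]
  split_ifs <;> norm_num

theorem forcesProper_alternatingTemp (n : ℕ) : ForcesProper (alternatingTemp n) := by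
  refine forcesProper_of_disjoint_succ fun i hi => ?_
  simp only [alternatingTemp]
  rcases Nat.mod_two_eq_zero_or_one i with h | h
  · rw [if_pos h, if_neg (by omega)]
    decide
  · rw [if_neg (by omega), if_pos (by omega)]
    decide

theorem PEnt_alternatingTemp (n : ℕ) :
    PEnt (alternatingTemp n) = (((n - 1 + 1) / 2 : ℕ) : ℝ) * Real.logb 3 2 := by
  rw [PEnt_eq_card_mul_logb (pProper_alternatingTemp n)
    (fun e => by rw [card_alternatingTemp]; split_ifs <;> norm_num)]
  simp only [card_alternatingTemp, ite_eq_left_iff, OfNat.one_ne_ofNat, imp_false, not_not]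
  rw [← card_filter_mod_two_eq_zero_range, ← Nat.Iio_eq_range, ← Fin.map_valEmbedding_univ,
    filter_map, card_map]
  rfl

/-- Extremal entropy for proper-path 3-colouring templates (the non-example of
Section 4.7): the maximum entropy of a 3-colouring template for `P_n` all of whose
realisations have no two consecutive edges of the same colour equals
`⌈(n-1)/2⌉·log₃ 2`. -/
theorem path_extremal_entropy (n : ℕ) (hn : 3 ≤ n) :
    sSup {x : ℝ | ∃ t : PathTemp n, PProper t ∧
        (∀ c, PRealises c t → ProperlyColoured c) ∧ PEnt t = x} =
      (((n - 1 + 1) / 2 : ℕ) : ℝ) * Real.logb 3 2 := by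
  refine IsGreatest.csSup_eq ⟨⟨alternatingTemp n, pProper_alternatingTemp n,
    forcesProper_alternatingTemp n, PEnt_alternatingTemp n⟩, ?_⟩
  rintro x ⟨t, ht, hf, rfl⟩
  exact ForcesProper.PEnt_le hn ht hf
end
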